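/- arXiv:math/0602095 — 8 statements merged into one kernel-verified Lean document; each statement's English description precedes it below -/
import Mathlib

section
/- Let f = u + iv : ℂ → ℂ (with u, v real-valued) be differentiable in the real sense at a point z, and let μ ∈ ℂ with |μ| < 1. Then the Beltrami equation ∂̄f(z) = μ ∂f(z) holds if and only if A_μ ∇u(z) = −Q ∇v(z), where Q = [[0, −1], [1, 0]] and ∇u, ∇v denote the gradients of u and v at z. -/
/-- The Wirtinger derivative `∂̄f(z) = (1/2)(∂f/∂x + i ∂f/∂y)` of a map `f : ℂ → ℂ`
viewed as real-differentiable at `z`. -/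
noncomputable def wirtingerBar (f : ℂ → ℂ) (z : ℂ) : ℂ :=
  (1 / 2) * (fderiv ℝ f z 1 + Complex.I * fderiv ℝ f z Complex.I)

/-- The Wirtinger derivative `∂f(z) = (1/2)(∂f/∂x − i ∂f/∂y)`. -/
noncomputable def wirtinger (f : ℂ → ℂ) (z : ℂ) : ℂ :=
  (1 / 2) * (fderiv ℝ f z 1 - Complex.I * fderiv ℝ f z Complex.I)

open Matrix

/-!
Identify `ℝ²` with `ℂ` and put `p = u_x + i u_y` (that is `∇u`) and `q = v_y - i v_x`
(that is `-Q ∇v`). Then `2 ∂̄f = p - q` and `2 ∂f = conj (p + q)`, so the Beltrami equation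
reads `q + μ q̄ = p - μ p̄`. For `|μ| ≠ 1` the real-linear map `q ↦ q + μ q̄` is invertible
(apply `r ↦ r - μ r̄`, which multiplies it by `1 - |μ|²`), and solving for `q` gives
`(1 - |μ|²) q = (1 + |μ|²) p - 2 μ p̄`, which is `A_μ p = q` in real coordinates.
-/

open Complex ComplexConjugate

section RealImagParts

variable {E : Type*} [NormedAddCommGroup E] [NormedSpace ℝ E] {f : E → ℂ} {x : E}

theorem fderiv_re_apply (hf : DifferentiableAt ℝ f x) (h : E) :
    fderiv ℝ (fun y => (f y).re) x h = (fderiv ℝ f x h).re :=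
  congrArg (· h) (reCLM.hasFDerivAt.comp x hf.hasFDerivAt).fderiv

theorem fderiv_im_apply (hf : DifferentiableAt ℝ f x) (h : E) :
    fderiv ℝ (fun y => (f y).im) x h = (fderiv ℝ f x h).im :=
  congrArg (· h) (imCLM.hasFDerivAt.comp x hf.hasFDerivAt).fderiv

end RealImagParts

theorem wirtingerBar_eq_mul_wirtinger_iff (f : ℂ → ℂ) (z μ : ℂ) :
    wirtingerBar f z = μ * wirtinger f z ↔
      fderiv ℝ f z 1 + I * fderiv ℝ f z I = μ * (fderiv ℝ f z 1 - I * fderiv ℝ f z I) := by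
  rw [wirtingerBar, wirtinger, mul_left_comm, mul_right_inj' (by norm_num)]

theorem one_sub_norm_sq_ne_zero {μ : ℂ} (hμ : ‖μ‖ ≠ 1) : 1 - ‖μ‖ ^ 2 ≠ 0 := by
  rwa [sub_ne_zero, ne_comm, ne_eq, pow_eq_one_iff_of_nonneg (norm_nonneg μ) two_ne_zero]

noncomputable def ellipticMatrix (μ : ℂ) : Matrix (Fin 2) (Fin 2) ℝ :=
  !![(1 - 2 * μ.re + ‖μ‖ ^ 2) / (1 - ‖μ‖ ^ 2), -2 * μ.im / (1 - ‖μ‖ ^ 2);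
     -2 * μ.im / (1 - ‖μ‖ ^ 2), (1 + 2 * μ.re + ‖μ‖ ^ 2) / (1 - ‖μ‖ ^ 2)]

theorem ellipticMatrix_mulVec_eq_iff {μ : ℂ} (hμ : ‖μ‖ ≠ 1) (p q : ℂ) :
    ellipticMatrix μ *ᵥ ![p.re, p.im] = ![q.re, q.im] ↔
      (1 - ‖μ‖ ^ 2 : ℂ) * q = (1 + ‖μ‖ ^ 2 : ℂ) * p - 2 * μ * conj p := by
  have hd := one_sub_norm_sq_ne_zero hμ
  rw [← ofReal_pow, ← ofReal_one, ← ofReal_sub, ← ofReal_add]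
  simp only [ellipticMatrix, funext_iff, Fin.forall_fin_two, Complex.ext_iff, mulVec, dotProduct,
    Fin.sum_univ_two, of_apply, cons_val', cons_val_zero, cons_val_one, empty_val',
    cons_val_fin_one, mul_re, mul_im, sub_re, sub_im, ofReal_re, ofReal_im, conj_re, conj_im,
    re_ofNat, im_ofNat, div_mul_eq_mul_div, ← add_div, div_eq_iff hd]
  apply and_congr <;> constructor <;> intro h <;> linarith

theorem add_mul_conj_eq_sub_mul_conj_iff {μ : ℂ} (hμ : ‖μ‖ ≠ 1) (p q : ℂ) :
    q + μ * conj q = p - μ * conj p ↔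
      (1 - ‖μ‖ ^ 2 : ℂ) * q = (1 + ‖μ‖ ^ 2 : ℂ) * p - 2 * μ * conj p := by
  have hd : (1 - ‖μ‖ ^ 2 : ℂ) ≠ 0 := mod_cast one_sub_norm_sq_ne_zero hμ
  have hμμ : μ * conj μ = (‖μ‖ ^ 2 : ℂ) := by
    rw [mul_conj, ← ofReal_pow, Complex.sq_norm]
  constructor
  · intro h
    have hc : conj q + conj μ * q = conj p - conj μ * p := by
      simpa using congrArg conj h
    linear_combination h - μ * hc + (q + p) * hμμ
  · intro h
    have hc : (1 - ‖μ‖ ^ 2 : ℂ) * conj q = (1 + ‖μ‖ ^ 2 : ℂ) * conj p - 2 * conj μ * p := by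
      simpa [map_ofNat] using congrArg conj h
    refine mul_left_cancel₀ hd ?_
    linear_combination h + μ * hc - 2 * p * hμμ

theorem add_I_mul_eq_mul_sub_I_mul_iff (a b μ : ℂ) :
    a + I * b = μ * (a - I * b) ↔
      (⟨b.im, -a.im⟩ : ℂ) + μ * conj ⟨b.im, -a.im⟩ = ⟨a.re, b.re⟩ - μ * conj ⟨a.re, b.re⟩ := by
  have hbar : a + I * b = ⟨a.re, b.re⟩ - ⟨b.im, -a.im⟩ := by
    apply Complex.ext <;> simp only [sub_re, sub_im, add_re, add_im, mul_re, mul_im, I_re, I_im]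
      <;> ring
  have hdel : a - I * b = conj (⟨a.re, b.re⟩ + ⟨b.im, -a.im⟩) := by
    apply Complex.ext <;> simp only [sub_re, sub_im, add_re, add_im, mul_re, mul_im, I_re, I_im,
      conj_re, conj_im] <;> ring
  rw [hbar, hdel, map_add]
  constructor <;> intro h <;> linear_combination -h

/-- Let `f = u + iv : ℂ → ℂ` be real-differentiable at `z` and `|μ| < 1`.
Then the Beltrami equation `∂̄f(z) = μ ∂f(z)` holds iff `A_μ ∇u(z) = −Q ∇v(z)`. -/
theorem beltrami_iff_elliptic (f : ℂ → ℂ) (z : ℂ) (hf : DifferentiableAt ℝ f z)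
    (μ : ℂ) (hμ : ‖μ‖ < 1)
    (u v : ℂ → ℝ) (hu : u = fun w => (f w).re) (hv : v = fun w => (f w).im)
    (Q Aμ : Matrix (Fin 2) (Fin 2) ℝ)
    (hQ : Q = !![0, -1; 1, 0])
    (hA : Aμ = !![(1 - 2 * μ.re + ‖μ‖ ^ 2) / (1 - ‖μ‖ ^ 2),
                  -2 * μ.im / (1 - ‖μ‖ ^ 2);
                  -2 * μ.im / (1 - ‖μ‖ ^ 2),
                  (1 + 2 * μ.re + ‖μ‖ ^ 2) / (1 - ‖μ‖ ^ 2)])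
    (gradu gradv : Fin 2 → ℝ)
    (hgu : gradu = ![fderiv ℝ u z 1, fderiv ℝ u z Complex.I])
    (hgv : gradv = ![fderiv ℝ v z 1, fderiv ℝ v z Complex.I]) :
    wirtingerBar f z = μ * wirtinger f z ↔ Aμ.mulVec gradu = -(Q.mulVec gradv) := by
  subst hu hv hQ hA hgu hgv
  set a := fderiv ℝ f z 1
  set b := fderiv ℝ f z I
  have hQv : -(!![0, -1; 1, 0] *ᵥ ![a.im, b.im]) = ![b.im, -a.im] := by
    ext i; fin_cases i <;> simp
  rw [wirtingerBar_eq_mul_wirtinger_iff, add_I_mul_eq_mul_sub_I_mul_iff,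
    add_mul_conj_eq_sub_mul_conj_iff hμ.ne, fderiv_re_apply hf, fderiv_re_apply hf,
    fderiv_im_apply hf, fderiv_im_apply hf, hQv]
  exact (ellipticMatrix_mulVec_eq_iff hμ.ne _ _).symm
end

section
/- Let α > 0, let k : ℝ → ℝ be 2π-periodic with k ≥ 1, and let η₁, η₂ : ℝ → ℝ be differentiable 2π-periodic functions. Define f(z) = |z|^α (η₁(θ) + i η₂(θ)) and μ(z) = ((1 − k(θ))/(1 + k(θ))) z z̄⁻¹ for z = ρ e^{iθ} ≠ 0. Then f satisfies the Beltrami equation ∂̄f(z) = μ(z) ∂f(z) at every z ≠ 0 if and only if (η₁, η₂) satisfies the first order system η₁′(θ) = −α k(θ) η₂(θ) and η₂′(θ) = α k(θ) η₁(θ) for all θ ∈ ℝ. -/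
/-! Near `z₀ ≠ 0` the branch `L z = log (z / z₀) + log z₀` of the logarithm is holomorphic, and
since `η = η₁ + i η₂` is `2π`-periodic, `f = Φ ∘ L` there with `Φ w = exp (α Re w) η (Im w)`.
As `L' = 1/z`, the chain rule for Wirtinger derivatives gives
`∂̄f = |z|^α (α η + i η') / (2 z̄)` and `∂f = |z|^α (α η - i η') / (2 z)` at `θ = arg z`, so the
Beltrami equation with `μ = (1 - k)/(1 + k) · z / z̄` is equivalent to `η' = i α k η`, which is the
stated system written in components. Periodicity of `k` and `η` transfers it from `arg z` to all
of `ℝ`. -/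

open Complex ComplexConjugate Function

theorem Function.Periodic.eq_of_coe_angle_eq {β : Type*} {g : ℝ → β}
    (hg : Periodic g (2 * Real.pi)) {a b : ℝ} (h : (a : Real.Angle) = b) : g a = g b := by
  obtain ⟨n, hn⟩ := Real.Angle.angle_eq_iff_two_pi_dvd_sub.1 h
  rw [sub_eq_iff_eq_add'.1 hn, mul_comm]
  exact hg.int_mul n b

theorem Function.Periodic.forall_of_forall_arg {P : ℝ → Prop} (hP : Periodic P (2 * Real.pi))
    (h : ∀ z : ℂ, z ≠ 0 → P z.arg) (θ : ℝ) : P θ := by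
  have hθ := h _ (exp_ne_zero (θ * I))
  rwa [arg_exp_mul_I, hP.eq_of_coe_angle_eq (Real.Angle.coe_toIocMod θ _)] at hθ

theorem Function.Periodic.deriv {𝕜 F : Type*} [NontriviallyNormedField 𝕜] [NormedAddCommGroup F]
    [NormedSpace 𝕜 F] {g : 𝕜 → F} {c : 𝕜} (hg : Periodic g c) : Periodic (deriv g) c := fun x => by
  rw [← deriv_comp_add_const, funext fun y => hg y]

theorem ContinuousLinearMap.apply_eq_re_mul_add_im_mul (D : ℂ →L[ℝ] ℂ) (v : ℂ) :
    D v = v.re * D 1 + v.im * D I := by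
  conv_lhs => rw [← re_add_im v, ← mul_one (v.re : ℂ), real_smul.symm, real_smul.symm]
  rw [map_add, map_smul, map_smul, real_smul, real_smul]

theorem fderiv_comp_apply_of_hasDerivAt {Φ g : ℂ → ℂ} {z g' : ℂ}
    (hΦ : DifferentiableAt ℝ Φ (g z)) (hg : HasDerivAt g g' z) (v : ℂ) :
    fderiv ℝ (Φ ∘ g) z v = fderiv ℝ Φ (g z) (v * g') := by
  rw [fderiv_comp z hΦ (hg.differentiableAt.restrictScalars ℝ), ContinuousLinearMap.comp_apply,
    (hg.hasFDerivAt.restrictScalars ℝ).fderiv]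
  simp [mul_comm]

theorem wirtingerBar_comp_of_hasDerivAt {Φ g : ℂ → ℂ} {z g' : ℂ}
    (hΦ : DifferentiableAt ℝ Φ (g z)) (hg : HasDerivAt g g' z) :
    wirtingerBar (Φ ∘ g) z = wirtingerBar Φ (g z) * conj g' := by
  simp only [wirtingerBar, fderiv_comp_apply_of_hasDerivAt hΦ hg, one_mul]
  rw [(fderiv ℝ Φ (g z)).apply_eq_re_mul_add_im_mul g',
    (fderiv ℝ Φ (g z)).apply_eq_re_mul_add_im_mul (I * g')]
  conv_rhs => rw [← re_add_im g']
  simp only [mul_re, mul_im, I_re, I_im, map_add, map_mul, conj_ofReal, conj_I]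
  push_cast
  linear_combination (1 / 2 * g'.im * fderiv ℝ Φ (g z) I) * I_sq

theorem wirtinger_comp_of_hasDerivAt {Φ g : ℂ → ℂ} {z g' : ℂ}
    (hΦ : DifferentiableAt ℝ Φ (g z)) (hg : HasDerivAt g g' z) :
    wirtinger (Φ ∘ g) z = wirtinger Φ (g z) * g' := by
  simp only [wirtinger, fderiv_comp_apply_of_hasDerivAt hΦ hg, one_mul]
  rw [(fderiv ℝ Φ (g z)).apply_eq_re_mul_add_im_mul g',
    (fderiv ℝ Φ (g z)).apply_eq_re_mul_add_im_mul (I * g')]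
  conv_rhs => rw [← re_add_im g']
  simp only [mul_re, mul_im, I_re, I_im]
  push_cast
  linear_combination (1 / 2 * g'.im * fderiv ℝ Φ (g z) I) * I_sq

noncomputable def radialStretching (α : ℝ) (η : ℝ → ℂ) (z : ℂ) : ℂ :=
  ((‖z‖ ^ α : ℝ) : ℂ) * η z.arg

/-- `radialStretching` in the logarithmic coordinate `w = log z`. -/
noncomputable def radialStretchingLog (α : ℝ) (η : ℝ → ℂ) (w : ℂ) : ℂ :=
  (Real.exp (α * w.re) : ℂ) * η w.im

theorem radialStretchingLog_partials (α : ℝ) {η : ℝ → ℂ} {η' w : ℂ}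
    (hη : HasDerivAt η η' w.im) :
    DifferentiableAt ℝ (radialStretchingLog α η) w ∧
      fderiv ℝ (radialStretchingLog α η) w 1 = α * Real.exp (α * w.re) * η w.im ∧
      fderiv ℝ (radialStretchingLog α η) w I = Real.exp (α * w.re) * η' := by
  have hexp : HasFDerivAt (fun w : ℂ => (Real.exp (α * w.re) : ℂ))
      (ofRealCLM.comp (Real.exp (α * w.re) • α • reCLM)) w :=
    ofRealCLM.hasFDerivAt.comp w
      ((Real.hasDerivAt_exp _).comp_hasFDerivAt w (reCLM.hasFDerivAt.const_mul α))
  have hΦ : HasFDerivAt (radialStretchingLog α η) _ w :=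
    hexp.mul (hη.hasFDerivAt.comp w imCLM.hasFDerivAt)
  refine ⟨hΦ.differentiableAt, ?_, ?_⟩
  · rw [hΦ.fderiv]
    simp only [ofReal_exp, ofReal_mul, ContinuousLinearMap.comp_smulₛₗ, Real.ringHom_apply,
      add_apply, smul_apply, ContinuousLinearMap.comp_apply, imCLM_apply, one_im,
      ContinuousLinearMap.toSpanSingleton_apply, zero_smul, smul_eq_mul, mul_zero, reCLM_apply,
      one_re, ofRealCLM_apply, ofReal_one, real_smul, mul_one, zero_add]
    ring
  · rw [hΦ.fderiv]
    simp

theorem radialStretching_eq_radialStretchingLog (α : ℝ) {η : ℝ → ℂ}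
    (hη : Periodic η (2 * Real.pi)) {z₀ z : ℂ} (hz₀ : z₀ ≠ 0) (hz : z ≠ 0) :
    radialStretching α η z = radialStretchingLog α η (log (z / z₀) + log z₀) := by
  have hre : (log (z / z₀) + log z₀).re = Real.log ‖z‖ := by
    rw [add_re, log_re, log_re, norm_div,
      Real.log_div (norm_ne_zero_iff.2 hz) (norm_ne_zero_iff.2 hz₀), sub_add_cancel]
  have harg : (z.arg : Real.Angle) = ((log (z / z₀) + log z₀).im : ℝ) := by
    rw [add_im, log_im, log_im, Real.Angle.coe_add, arg_div_coe_angle hz hz₀, sub_add_cancel]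
  rw [radialStretching, radialStretchingLog, hre, hη.eq_of_coe_angle_eq harg,
    Real.rpow_def_of_pos (norm_pos_iff.2 hz), mul_comm α]

theorem hasDerivAt_log_div_add_log {z₀ : ℂ} (hz₀ : z₀ ≠ 0) :
    HasDerivAt (fun z => log (z / z₀) + log z₀) z₀⁻¹ z₀ := by
  have hlog := (hasDerivAt_log (by simp [div_self hz₀] : z₀ / z₀ ∈ slitPlane)).comp
    (h := (· / z₀)) z₀ ((hasDerivAt_id z₀).div_const z₀)
  simpa [div_self hz₀] using hlog.add_const (log z₀)

theorem radialStretching_wirtinger (α : ℝ) {η : ℝ → ℂ} (hηper : Periodic η (2 * Real.pi))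
    {z η' : ℂ} (hz : z ≠ 0) (hη : HasDerivAt η η' z.arg) :
    DifferentiableAt ℝ (radialStretching α η) z ∧
      wirtingerBar (radialStretching α η) z =
        ((‖z‖ ^ α : ℝ) : ℂ) / 2 * (α * η z.arg + I * η') * conj z⁻¹ ∧
      wirtinger (radialStretching α η) z =
        ((‖z‖ ^ α : ℝ) : ℂ) / 2 * (α * η z.arg - I * η') * z⁻¹ := by
  set L : ℂ → ℂ := fun z' => log (z' / z) + log z
  have hL : HasDerivAt L z⁻¹ z := hasDerivAt_log_div_add_log hz
  have hLz : L z = log z := by simp [L, div_self hz]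
  have hfL : radialStretching α η =ᶠ[nhds z] radialStretchingLog α η ∘ L :=
    (eventually_ne_nhds hz).mono fun z' hz' =>
      radialStretching_eq_radialStretchingLog α hηper hz hz'
  obtain ⟨hΦ, hΦ1, hΦI⟩ := radialStretchingLog_partials α (w := L z) (by rwa [hLz, log_im])
  have hρ : Real.exp (α * (L z).re) = ‖z‖ ^ α := by
    rw [hLz, log_re, Real.rpow_def_of_pos (norm_pos_iff.2 hz), mul_comm α]
  refine ⟨(hΦ.comp z (hL.differentiableAt.restrictScalars ℝ)).congr_of_eventuallyEq hfL, ?_, ?_⟩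
  · rw [wirtingerBar, hfL.fderiv_eq, ← wirtingerBar, wirtingerBar_comp_of_hasDerivAt hΦ hL,
      wirtingerBar, hΦ1, hΦI, hρ, hLz, log_im]
    ring
  · rw [wirtinger, hfL.fderiv_eq, ← wirtinger, wirtinger_comp_of_hasDerivAt hΦ hL,
      wirtinger, hΦ1, hΦI, hρ, hLz, log_im]
    ring

theorem radialStretching_beltrami_iff (α : ℝ) {η : ℝ → ℂ} (hηper : Periodic η (2 * Real.pi))
    {z η' : ℂ} (hz : z ≠ 0) (hη : HasDerivAt η η' z.arg) {K : ℝ} (hK : 1 + K ≠ 0) :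
    wirtingerBar (radialStretching α η) z =
        (((1 - K) / (1 + K) : ℝ) : ℂ) * z * (conj z)⁻¹ * wirtinger (radialStretching α η) z ↔
      η' = I * ((α * K : ℝ) : ℂ) * η z.arg := by
  obtain ⟨-, hbar, hdel⟩ := radialStretching_wirtinger α hηper hz hη
  have hρ : ((‖z‖ ^ α : ℝ) : ℂ) / 2 * conj z⁻¹ ≠ 0 := by
    have : (0 : ℝ) < ‖z‖ ^ α := Real.rpow_pos_of_pos (norm_pos_iff.2 hz) α
    simpa [hz] using this.ne'
  have hK' : (1 + K : ℂ) ≠ 0 := by exact_mod_cast hK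
  set A : ℂ := α * η z.arg
  rw [hbar, hdel, show ((‖z‖ ^ α : ℝ) : ℂ) / 2 * (A + I * η') * conj z⁻¹ =
      ((‖z‖ ^ α : ℝ) : ℂ) / 2 * conj z⁻¹ * (A + I * η') by ring,
    show (((1 - K) / (1 + K) : ℝ) : ℂ) * z * (conj z)⁻¹ *
        (((‖z‖ ^ α : ℝ) : ℂ) / 2 * (A - I * η') * z⁻¹) =
      ((‖z‖ ^ α : ℝ) : ℂ) / 2 * conj z⁻¹ * ((1 - K) / (1 + K) * (A - I * η')) by
        rw [map_inv₀]; push_cast; field_simp,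
    mul_right_inj' hρ, div_mul_eq_mul_div, eq_div_iff hK']
  push_cast
  constructor
  · intro h
    linear_combination (-I / 2) * h + η' * I_sq
  · intro h
    linear_combination (2 * I) * h + 2 * K * A * I_sq

theorem ofReal_add_ofReal_mul_I_eq_I_mul_iff (a b a' b' c : ℝ) :
    (a' + b' * I : ℂ) = I * c * (a + b * I) ↔ a' = -(c * b) ∧ b' = c * a := by
  simp [Complex.ext_iff]

theorem beltrami_generalized_radial_stretching_general (α : ℝ)
    (k η₁ η₂ : ℝ → ℝ)
    (hk1 : ∀ θ, 1 ≤ k θ) (hkper : Function.Periodic k (2 * Real.pi))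
    (hη₁d : Differentiable ℝ η₁) (hη₂d : Differentiable ℝ η₂)
    (hη₁per : Function.Periodic η₁ (2 * Real.pi))
    (hη₂per : Function.Periodic η₂ (2 * Real.pi))
    (f μ : ℂ → ℂ)
    (hf : ∀ z : ℂ, f z =
      (↑(‖z‖ ^ α) : ℂ) * (↑(η₁ z.arg) + ↑(η₂ z.arg) * Complex.I))
    (hμ : ∀ z : ℂ, μ z =
      (((1 - k z.arg) / (1 + k z.arg) : ℝ) : ℂ) * z * (starRingEnd ℂ z)⁻¹) :
    (∀ z : ℂ, z ≠ 0 → DifferentiableAt ℝ f z ∧ wirtingerBar f z = μ z * wirtinger f z) ↔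
      (∀ θ : ℝ, deriv η₁ θ = -(α * k θ * η₂ θ) ∧ deriv η₂ θ = α * k θ * η₁ θ) := by
  set η : ℝ → ℂ := fun t => η₁ t + η₂ t * I
  set η' : ℝ → ℂ := fun t => deriv η₁ t + deriv η₂ t * I
  have hη : ∀ t, HasDerivAt η (η' t) t := fun t =>
    ((hη₁d t).hasDerivAt.ofReal_comp).add ((hη₂d t).hasDerivAt.ofReal_comp.mul_const I)
  have hηper : Periodic η (2 * Real.pi) := fun t => by simp only [η, hη₁per t, hη₂per t]
  obtain rfl : f = radialStretching α η := funext hf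
  have hbeltrami : ∀ z : ℂ, z ≠ 0 → (wirtingerBar (radialStretching α η) z =
      μ z * wirtinger (radialStretching α η) z ↔
      η' z.arg = I * ((α * k z.arg : ℝ) : ℂ) * η z.arg) := fun z hz => by
    rw [hμ]
    exact radialStretching_beltrami_iff α hηper hz (hη z.arg) (by linarith [hk1 z.arg])
  simp_rw [← ofReal_add_ofReal_mul_I_eq_I_mul_iff]
  constructor
  · refine fun h => Periodic.forall_of_forall_arg (fun θ => ?_) fun z hz => ?_
    · simp only [hkper θ, hη₁per θ, hη₂per θ, hη₁per.deriv θ, hη₂per.deriv θ]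
    · exact (hbeltrami z hz).1 (h z hz).2
  · exact fun h z hz =>
      ⟨(radialStretching_wirtinger α hηper hz (hη z.arg)).1, (hbeltrami z hz).2 (h z.arg)⟩

/-- For `α > 0`, `k ≥ 1` a `2π`-periodic function and `η₁, η₂`
differentiable `2π`-periodic functions, the map
`f(z) = |z|^α (η₁(arg z) + i η₂(arg z))` satisfies the Beltrami equation
`∂̄f = μ ∂f` with `μ(z) = ((1 − k(arg z))/(1 + k(arg z))) z z̄⁻¹` at every
`z ≠ 0` if and only if `η₁′ = −α k η₂` and `η₂′ = α k η₁` on `ℝ`. -/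
theorem beltrami_generalized_radial_stretching (α : ℝ) (hα : 0 < α)
    (k η₁ η₂ : ℝ → ℝ)
    (hk1 : ∀ θ, 1 ≤ k θ) (hkper : Function.Periodic k (2 * Real.pi))
    (hη₁d : Differentiable ℝ η₁) (hη₂d : Differentiable ℝ η₂)
    (hη₁per : Function.Periodic η₁ (2 * Real.pi))
    (hη₂per : Function.Periodic η₂ (2 * Real.pi))
    (f μ : ℂ → ℂ)
    (hf : ∀ z : ℂ, f z =
      (↑(‖z‖ ^ α) : ℂ) * (↑(η₁ z.arg) + ↑(η₂ z.arg) * Complex.I))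
    (hμ : ∀ z : ℂ, μ z =
      (((1 - k z.arg) / (1 + k z.arg) : ℝ) : ℂ) * z * (starRingEnd ℂ z)⁻¹) :
    (∀ z : ℂ, z ≠ 0 → DifferentiableAt ℝ f z ∧ wirtingerBar f z = μ z * wirtinger f z) ↔
      (∀ θ : ℝ, deriv η₁ θ = -(α * k θ * η₂ θ) ∧ deriv η₂ θ = α * k θ * η₁ θ) :=
  beltrami_generalized_radial_stretching_general α k η₁ η₂ hk1 hkper hη₁d hη₂d hη₁per hη₂per f μ hf
    hμ
end

section
/- Let α > 0, let k : ℝ → ℝ be 2π-periodic with k ≥ 1, and let η₁, η₂ : ℝ → ℝ be differentiable 2π-periodic functions satisfying η₁′ = −α k η₂ and η₂′ = α k η₁ on ℝ. Define f(z) = |z|^α (η₁(θ) + i η₂(θ)) for z = ρ e^{iθ} ≠ 0. Then for every z ≠ 0, f is differentiable at z in the real sense and ‖Df(z)‖² = k(arg z) · J_f(z), where ‖Df(z)‖ denotes the operator norm of the real Fréchet derivative Df(z) and J_f(z) = det Df(z) is the Jacobian determinant. -/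
/-!
Write `η = η₁ + i η₂`, so that `η' = i α k η`. In logarithmic coordinates `w = log z` the map is
`w ↦ e^{α Re w} η(Im w)`, and for `z₀ ≠ 0`, `θ = arg z₀`, `w = h / z₀` this gives
`Df(z₀) h = α |z₀|^α η(θ) (Re w + i k(θ) Im w)`, i.e. `Df(z₀) h = a h + b h̄` with
`a = (1 + k) c / z₀`, `b = (1 - k) c / z̄₀`, `c = α |z₀|^α η(θ) / 2`. For such a map
`‖Df‖ = |a| + |b|` and `det Df = |a|² - |b|²`, so for `k ≥ 1` both sides equal `4 k² |c|² / |z₀|²`.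
-/

open Complex ComplexConjugate

noncomputable def mulAddMulConj (a b : ℂ) : ℂ →L[ℝ] ℂ :=
  a • ContinuousLinearMap.id ℝ ℂ + b • conjCLE.toContinuousLinearMap

@[simp]
lemma mulAddMulConj_apply (a b h : ℂ) : mulAddMulConj a b h = a * h + b * conj h := by
  simp [mulAddMulConj]

lemma det_mulAddMulConj (a b : ℂ) :
    LinearMap.det (mulAddMulConj a b : ℂ →ₗ[ℝ] ℂ) = ‖a‖ ^ 2 - ‖b‖ ^ 2 := by
  rw [← LinearMap.det_toMatrix basisOneI, Matrix.det_fin_two]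
  simp only [LinearMap.toMatrix_apply, coe_basisOneI, ContinuousLinearMap.coe_coe,
    Matrix.cons_val_zero, Matrix.cons_val_one, mulAddMulConj_apply, coe_basisOneI_repr,
    map_one, conj_I, Complex.sq_norm, normSq_apply, mul_one, add_re, add_im, mul_re, mul_im,
    I_re, I_im, neg_re, neg_im]
  ring

lemma norm_mulAddMulConj (a b : ℂ) : ‖mulAddMulConj a b‖ = ‖a‖ + ‖b‖ := by
  refine le_antisymm (ContinuousLinearMap.opNorm_le_bound _ (by positivity) fun h => ?_) ?_
  · calc ‖a * h + b * conj h‖ ≤ ‖a * h‖ + ‖b * conj h‖ := norm_add_le _ _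
      _ = (‖a‖ + ‖b‖) * ‖h‖ := by simp only [norm_mul, RCLike.norm_conj]; ring
  · -- rotating `h` by half the angle between `a` and `b` aligns `a * h` with `b * conj h`
    set h := exp (((arg b - arg a) / 2 : ℝ) * I)
    set u := exp (((arg a + arg b) / 2 : ℝ) * I)
    have hah : a * h = ‖a‖ * u := by
      conv_lhs => rw [← norm_mul_exp_arg_mul_I a]
      rw [mul_assoc, ← exp_add]; congr 2; push_cast; ring
    have hbh : b * conj h = ‖b‖ * u := by
      conv_lhs => rw [← norm_mul_exp_arg_mul_I b]
      rw [← exp_conj, map_mul, conj_ofReal, conj_I, mul_assoc, ← exp_add]; congr 2; push_cast; ring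
    calc ‖a‖ + ‖b‖ = ‖mulAddMulConj a b h‖ := by
          rw [mulAddMulConj_apply, hah, hbh, ← add_mul, norm_mul, norm_exp_ofReal_mul_I, mul_one]
          norm_cast; rw [Real.norm_of_nonneg (by positivity)]
      _ ≤ ‖mulAddMulConj a b‖ * ‖h‖ := (mulAddMulConj a b).le_opNorm h
      _ = ‖mulAddMulConj a b‖ := by rw [norm_exp_ofReal_mul_I, mul_one]

/-- `z ↦ ‖z‖ ^ α • η (arg z)` in the coordinate `w = log z`. For `2π`-periodic `η` it is invariant
under `w ↦ w + 2πin`, so it may be composed with any local branch of `log`. -/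
noncomputable def expPolar (α : ℝ) (η : ℝ → ℂ) (w : ℂ) : ℂ := Real.exp (α * w.re) • η w.im

variable {α : ℝ} {η : ℝ → ℂ}

lemma expPolar_add_int_mul_two_pi_I (hη : Function.Periodic η (2 * Real.pi)) (w : ℂ) (n : ℤ) :
    expPolar α η (w + n * (2 * Real.pi * I)) = expPolar α η w := by
  have hre : (w + n * (2 * Real.pi * I)).re = w.re := by simp
  have him : (w + n * (2 * Real.pi * I)).im = w.im + n * (2 * Real.pi) := by simp
  rw [expPolar, expPolar, hre, him, hη.int_mul n]

lemma expPolar_log {z : ℂ} (hz : z ≠ 0) :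
    expPolar α η (log z) = ((‖z‖ ^ α : ℝ) : ℂ) * η (arg z) := by
  rw [expPolar, log_re, log_im, Real.rpow_def_of_pos (norm_pos_iff.mpr hz), mul_comm α, real_smul]

lemma hasFDerivAt_expPolar {η' : ℂ} {w : ℂ} (hη' : HasDerivAt η η' w.im) :
    HasFDerivAt (expPolar α η)
      (Real.exp (α * w.re) • (reCLM.smulRight (α * η w.im) + imCLM.smulRight η')) w := by
  have hexp := (Real.hasDerivAt_exp _).comp_hasFDerivAt w (reCLM.hasFDerivAt.const_mul α)
  have hη := hη'.hasFDerivAt.comp w imCLM.hasFDerivAt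
  refine (hexp.smul hη).congr_fderiv ?_
  ext h
  simp
  ring

/-- A branch of `log` near `z₀`, holomorphic at `z₀` even when `z₀` lies on the cut of `log`. -/
lemma hasDerivAt_log_add_log_div {z₀ : ℂ} (hz₀ : z₀ ≠ 0) :
    HasDerivAt (fun z => log z₀ + log (z / z₀)) z₀⁻¹ z₀ := by
  have hdiv : HasDerivAt (fun z => z / z₀) z₀⁻¹ z₀ := by
    simpa using (hasDerivAt_id z₀).div_const z₀
  have hlog := (hasDerivAt_log (by simp [hz₀] : z₀ / z₀ ∈ slitPlane)).comp
    (h := fun z => z / z₀) z₀ hdiv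
  simpa [hz₀] using hlog.const_add (log z₀)

lemma expPolar_log_add_log_div (hη : Function.Periodic η (2 * Real.pi)) {z z₀ : ℂ}
    (hz : z ≠ 0) (hz₀ : z₀ ≠ 0) :
    expPolar α η (log z₀ + log (z / z₀)) = ((‖z‖ ^ α : ℝ) : ℂ) * η (arg z) := by
  have hexp : exp (log z₀ + log (z / z₀)) = exp (log z) := by
    rw [exp_add, exp_log hz₀, exp_log (div_ne_zero hz hz₀), exp_log hz, mul_div_cancel₀ _ hz₀]
  obtain ⟨n, hn⟩ := exp_eq_exp_iff_exists_int.mp hexp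
  rw [hn, expPolar_add_int_mul_two_pi_I hη, expPolar_log hz]

theorem hasFDerivAt_rpow_norm_mul_comp_arg (hη : Function.Periodic η (2 * Real.pi)) {η' z₀ : ℂ}
    (hz₀ : z₀ ≠ 0) (hη' : HasDerivAt η η' (arg z₀)) :
    HasFDerivAt (fun z => ((‖z‖ ^ α : ℝ) : ℂ) * η (arg z))
      (mulAddMulConj ((‖z₀‖ ^ α : ℝ) * (α * η (arg z₀) - I * η') / (2 * z₀))
        ((‖z₀‖ ^ α : ℝ) * (α * η (arg z₀) + I * η') / (2 * conj z₀))) z₀ := by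
  have hlog := hasDerivAt_log_add_log_div hz₀
  have hlog₀ : log z₀ + log (z₀ / z₀) = log z₀ := by simp [hz₀]
  rw [← log_im, ← hlog₀] at hη'
  have hcomp := (hasFDerivAt_expPolar (α := α) hη').comp z₀ (hlog.hasFDerivAt.restrictScalars ℝ)
  refine (hcomp.congr_of_eventuallyEq ?_).congr_fderiv ?_
  · filter_upwards [isOpen_ne.mem_nhds hz₀] with z hz
    exact (expPolar_log_add_log_div hη hz hz₀).symm
  · have hconj : conj z₀ ≠ 0 := by simpa using hz₀
    have hpow : Real.exp (α * Real.log ‖z₀‖) = ‖z₀‖ ^ α := by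
      rw [Real.rpow_def_of_pos (norm_pos_iff.mpr hz₀), mul_comm]
    ext h
    simp only [hlog₀, ContinuousLinearMap.comp_apply, ContinuousLinearMap.coe_restrictScalars',
      ContinuousLinearMap.toSpanSingleton_apply, smul_apply, add_apply,
      ContinuousLinearMap.smulRight_apply, reCLM_apply, imCLM_apply,
      log_re, log_im, mulAddMulConj_apply, smul_eq_mul, real_smul, re_eq_add_conj, im_eq_sub_conj,
      map_mul, map_inv₀, hpow]
    field_simp
    linear_combination (‖z₀‖ ^ α : ℝ) * (conj z₀ * h - z₀ * conj h) * η' * I_sq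

lemma sq_norm_mulAddMulConj_eq_mul_det {K : ℝ} (hK : 1 ≤ K) (c z : ℂ) :
    ‖mulAddMulConj ((1 + K) * c / z) ((1 - K) * c / conj z)‖ ^ 2 =
      K * LinearMap.det (mulAddMulConj ((1 + K) * c / z) ((1 - K) * c / conj z) : ℂ →ₗ[ℝ] ℂ) := by
  have ha : ‖(1 + K) * c / z‖ = (1 + K) * (‖c‖ / ‖z‖) := by
    rw [norm_div, norm_mul, ← ofReal_one, ← ofReal_add, norm_real,
      Real.norm_of_nonneg (by linarith)]
    ring
  have hb : ‖(1 - K) * c / conj z‖ = (K - 1) * (‖c‖ / ‖z‖) := by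
    rw [norm_div, norm_mul, RCLike.norm_conj, ← ofReal_one, ← ofReal_sub, norm_real,
      Real.norm_of_nonpos (by linarith)]
    ring
  rw [norm_mulAddMulConj, det_mulAddMulConj, ha, hb]
  ring

theorem opNorm_sq_eq_k_mul_jacobian_general (α : ℝ)
    (k η₁ η₂ : ℝ → ℝ)
    (hk1 : ∀ θ, 1 ≤ k θ)
    (hη₁per : Function.Periodic η₁ (2 * Real.pi))
    (hη₂per : Function.Periodic η₂ (2 * Real.pi))
    (hη₁ : ∀ θ : ℝ, HasDerivAt η₁ (-(α * k θ * η₂ θ)) θ)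
    (hη₂ : ∀ θ : ℝ, HasDerivAt η₂ (α * k θ * η₁ θ) θ)
    (f : ℂ → ℂ)
    (hf : ∀ z : ℂ, f z =
      (↑(‖z‖ ^ α) : ℂ) * (↑(η₁ z.arg) + ↑(η₂ z.arg) * Complex.I)) :
    ∀ z : ℂ, z ≠ 0 → DifferentiableAt ℝ f z ∧
      ‖fderiv ℝ f z‖ ^ 2 = k z.arg * LinearMap.det (fderiv ℝ f z : ℂ →ₗ[ℝ] ℂ) := by
  set η : ℝ → ℂ := fun θ => η₁ θ + η₂ θ * I
  have hηper : Function.Periodic η (2 * Real.pi) := fun θ => by simp only [η, hη₁per θ, hη₂per θ]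
  have hη : ∀ θ, HasDerivAt η (I * (α * k θ) * η θ) θ := fun θ =>
    ((hη₁ θ).ofReal_comp.add ((hη₂ θ).ofReal_comp.mul_const I)).congr_deriv
      (by push_cast; linear_combination (-(α * k θ * η₂ θ) : ℂ) * I_sq)
  intro z hz
  set c : ℂ := (‖z‖ ^ α : ℝ) * α * η (arg z) / 2
  have hD := hasFDerivAt_rpow_norm_mul_comp_arg (α := α) hηper hz (hη (arg z))
  have hconj : conj z ≠ 0 := by simpa using hz
  have ha : (‖z‖ ^ α : ℝ) * (α * η (arg z) - I * (I * (α * k (arg z)) * η (arg z))) / (2 * z) =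
      (1 + k (arg z)) * c / z := by
    field_simp
    linear_combination (-(‖z‖ ^ α : ℝ) * α * k (arg z) * η (arg z) : ℂ) * I_sq
  have hb : (‖z‖ ^ α : ℝ) * (α * η (arg z) + I * (I * (α * k (arg z)) * η (arg z))) / (2 * conj z) =
      (1 - k (arg z)) * c / conj z := by
    field_simp
    linear_combination ((‖z‖ ^ α : ℝ) * α * k (arg z) * η (arg z) : ℂ) * I_sq
  rw [ha, hb] at hD
  rw [show f = fun z => ((‖z‖ ^ α : ℝ) : ℂ) * η (arg z) from funext hf]
  exact ⟨hD.differentiableAt, hD.fderiv ▸ sq_norm_mulAddMulConj_eq_mul_det (hk1 _) c z⟩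

/-- For `α > 0`, `k ≥ 1` a `2π`-periodic function and `η₁, η₂`
differentiable `2π`-periodic functions satisfying `η₁′ = −α k η₂`, `η₂′ = α k η₁`,
the map `f(z) = |z|^α (η₁(arg z) + i η₂(arg z))` is real-differentiable at every
`z ≠ 0` and satisfies `‖Df(z)‖² = k(arg z) · J_f(z)`, where `J_f(z) = det Df(z)`. -/
theorem opNorm_sq_eq_k_mul_jacobian (α : ℝ) (hα : 0 < α)
    (k η₁ η₂ : ℝ → ℝ)
    (hk1 : ∀ θ, 1 ≤ k θ) (hkper : Function.Periodic k (2 * Real.pi))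
    (hη₁per : Function.Periodic η₁ (2 * Real.pi))
    (hη₂per : Function.Periodic η₂ (2 * Real.pi))
    (hη₁ : ∀ θ : ℝ, HasDerivAt η₁ (-(α * k θ * η₂ θ)) θ)
    (hη₂ : ∀ θ : ℝ, HasDerivAt η₂ (α * k θ * η₁ θ) θ)
    (f : ℂ → ℂ)
    (hf : ∀ z : ℂ, f z =
      (↑(‖z‖ ^ α) : ℂ) * (↑(η₁ z.arg) + ↑(η₂ z.arg) * Complex.I)) :
    ∀ z : ℂ, z ≠ 0 → DifferentiableAt ℝ f z ∧
      ‖fderiv ℝ f z‖ ^ 2 = k z.arg * LinearMap.det (fderiv ℝ f z : ℂ →ₗ[ℝ] ℂ) :=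
  opNorm_sq_eq_k_mul_jacobian_general α k η₁ η₂ hk1 hη₁per hη₂per hη₁ hη₂ f hf
end

section
/- Let α > 0, let k : ℝ → ℝ be 2π-periodic with k ≥ 1, and let η₁, η₂ : ℝ → ℝ be differentiable 2π-periodic functions satisfying η₁′ = −α k η₂ and η₂′ = α k η₁ on ℝ. Define f(z) = |z|^α (η₁(θ) + i η₂(θ)) for z = ρ e^{iθ} ≠ 0. Then for every z = ρ e^{iθ} ≠ 0, the operator norm of the real Fréchet derivative satisfies ‖Df(z)‖² = α² k(θ)² ρ^{2(α−1)} (η₁(θ)² + η₂(θ)²). -/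
/-!
Write `f(w) = |w|^α g(arg w)` with `g = η₁ + i η₂`. Although `arg` jumps across the negative axis,
near `z` it agrees modulo `2π` with the smooth function `w ↦ arg z + arg (w / z)`, so the periodic
`g ∘ arg` is differentiable at `z`. Since `g' = i α k g`, in the orthonormal frame given by the
radial and angular unit vectors at `z` the derivative is multiplication by `α |z|^(α-1) g(θ)` after
the stretch `x + iy ↦ x + i k y`, whose norm is `max 1 |k| = k`.
-/

open Complex ContinuousLinearMap Function Real

noncomputable def stretchCLM (k : ℝ) : ℂ →L[ℝ] ℂ := reCLM.smulRight 1 + imCLM.smulRight (k * I)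

@[simp]
theorem stretchCLM_apply (k : ℝ) (v : ℂ) : stretchCLM k v = v.re + k * v.im * I := by
  simp only [stretchCLM, add_apply, smulRight_apply, reCLM_apply, imCLM_apply, real_smul, mul_one]
  ring

theorem norm_stretchCLM (k : ℝ) : ‖stretchCLM k‖ = max 1 |k| := by
  have hM : 0 ≤ max 1 |k| := zero_le_one.trans (le_max_left _ _)
  refine le_antisymm (opNorm_le_bound _ hM fun v => ?_) (max_le ?_ ?_)
  · have h1 : 1 ≤ max 1 |k| ^ 2 := one_le_pow₀ (le_max_left _ _)
    have hk : k ^ 2 ≤ max 1 |k| ^ 2 := by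
      rw [← sq_abs]; exact pow_le_pow_left₀ (abs_nonneg k) (le_max_right _ _) 2
    rw [← pow_le_pow_iff_left₀ (norm_nonneg _) (by positivity) two_ne_zero, mul_pow,
      Complex.sq_norm, Complex.sq_norm, stretchCLM_apply, ← ofReal_mul, normSq_add_mul_I,
      normSq_apply]
    nlinarith [sq_nonneg v.re, sq_nonneg v.im]
  · simpa using (stretchCLM k).le_opNorm 1
  · simpa using (stretchCLM k).le_opNorm I

theorem ContinuousLinearMap.opNorm_comp_mul_apply {F : Type*} [NormedAddCommGroup F]
    [NormedSpace ℝ F] (L : ℂ →L[ℝ] F) (w : ℂ) : ‖L.comp (mul ℝ ℂ w)‖ = ‖L‖ * ‖w‖ := by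
  refine le_antisymm ((opNorm_comp_le _ _).trans_eq (by rw [opNorm_mul_apply])) ?_
  rcases eq_or_ne w 0 with rfl | hw
  · simp
  have hL : L = (L.comp (mul ℝ ℂ w)).comp (mul ℝ ℂ w⁻¹) := by
    ext v; simp [hw]
  calc ‖L‖ * ‖w‖ ≤ ‖L.comp (mul ℝ ℂ w)‖ * ‖w⁻¹‖ * ‖w‖ := by
        gcongr
        conv_lhs => rw [hL]
        exact (opNorm_comp_le _ _).trans_eq (by rw [opNorm_mul_apply])
    _ = ‖L.comp (mul ℝ ℂ w)‖ := by
        rw [norm_inv, mul_assoc, inv_mul_cancel₀ (norm_ne_zero_iff.mpr hw), mul_one]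

theorem Complex.hasFDerivAt_norm_rpow {z : ℂ} (hz : z ≠ 0) (α : ℝ) :
    HasFDerivAt (fun w : ℂ => ‖w‖ ^ α) ((α * ‖z‖ ^ α) • reCLM.comp (mul ℝ ℂ z⁻¹)) z := by
  have h := ((hasStrictFDerivAt_norm_sq z).hasFDerivAt).rpow_const (p := α / 2)
    (Or.inl (by positivity))
  have hpow : ∀ w : ℂ, (‖w‖ ^ 2) ^ (α / 2) = ‖w‖ ^ α := fun w => by
    rw [← Real.rpow_natCast, ← Real.rpow_mul (norm_nonneg w)]
    ring_nf
  simp only [hpow] at h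
  refine h.congr_fderiv ?_
  ext v
  simp only [smul_apply, coe_innerSL_apply, Complex.inner, mul_re, conj_re, conj_im,
    nsmul_eq_mul, smul_eq_mul, ContinuousLinearMap.comp_apply, mul_apply', reCLM_apply, inv_re,
    inv_im]
  rw [Real.rpow_sub_one (by positivity), hpow, normSq_eq_norm_sq]
  field_simp
  ring

theorem Function.Periodic.apply_arg_eq_apply_add_arg_div {X : Type*} {g : ℝ → X}
    (hper : Periodic g (2 * π)) {z w : ℂ} (hz : z ≠ 0) (hw : w ≠ 0) :
    g w.arg = g (z.arg + (w / z).arg) := by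
  have hangle : ((z.arg + (w / z).arg : ℝ) : Angle) = (w.arg : Angle) := by
    rw [Angle.coe_add, arg_div_coe_angle hw hz]
    abel
  obtain ⟨n, hn⟩ := Angle.angle_eq_iff_two_pi_dvd_sub.mp hangle
  rw [show z.arg + (w / z).arg = w.arg + n * (2 * π) by linear_combination hn]
  exact (hper.int_mul n w.arg).symm

theorem hasFDerivAt_arg_add_arg_div {z : ℂ} (hz : z ≠ 0) :
    HasFDerivAt (fun w : ℂ => z.arg + (w / z).arg) (imCLM.comp (mul ℝ ℂ z⁻¹)) z := by
  have hlog : HasDerivAt (fun w : ℂ => log (w / z)) z⁻¹ z := by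
    simpa [div_self hz] using ((hasDerivAt_id z).div_const z).clog (by simp [div_self hz])
  have h := (imCLM.hasFDerivAt.comp z (hlog.hasFDerivAt.restrictScalars ℝ)).const_add z.arg
  simp only [comp_def, imCLM_apply, log_im] at h
  refine h.congr_fderiv ?_
  ext v
  simp only [ContinuousLinearMap.comp_apply, coe_restrictScalars', toSpanSingleton_apply,
    smul_eq_mul, imCLM_apply, mul_im, inv_im, inv_re, mul_apply']
  ring

theorem Function.Periodic.hasFDerivAt_comp_arg {E : Type*} [NormedAddCommGroup E]
    [NormedSpace ℝ E] {g : ℝ → E} {g' : E} (hper : Periodic g (2 * π)) {z : ℂ} (hz : z ≠ 0)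
    (hg : HasDerivAt g g' z.arg) :
    HasFDerivAt (fun w => g w.arg) ((imCLM.comp (mul ℝ ℂ z⁻¹)).smulRight g') z := by
  have hlift : HasFDerivAt (g ∘ fun w : ℂ => z.arg + (w / z).arg)
      ((imCLM.comp (mul ℝ ℂ z⁻¹)).smulRight g') z := by
    have hg' : HasDerivAt g g' (z.arg + (z / z).arg) := by simpa [div_self hz] using hg
    refine (hg'.hasFDerivAt.comp z (hasFDerivAt_arg_add_arg_div hz)).congr_fderiv ?_
    ext v; simp
  refine hlift.congr_of_eventuallyEq ?_
  filter_upwards [eventually_ne_nhds hz] with w hw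
  exact hper.apply_arg_eq_apply_add_arg_div hz hw

theorem Function.Periodic.hasFDerivAt_norm_rpow_smul_comp_arg {E : Type*} [NormedAddCommGroup E]
    [NormedSpace ℝ E] {g : ℝ → E} {g' : E} (hper : Periodic g (2 * π)) {z : ℂ} (hz : z ≠ 0)
    (hg : HasDerivAt g g' z.arg) (α : ℝ) :
    HasFDerivAt (fun w : ℂ => ‖w‖ ^ α • g w.arg)
      (‖z‖ ^ α • ((reCLM.comp (mul ℝ ℂ z⁻¹)).smulRight (α • g z.arg) +
        (imCLM.comp (mul ℝ ℂ z⁻¹)).smulRight g')) z := by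
  refine ((Complex.hasFDerivAt_norm_rpow hz α).smul
    (hper.hasFDerivAt_comp_arg hz hg)).congr_fderiv ?_
  ext v
  simp only [add_apply, smul_apply, smulRight_apply]
  module

theorem Function.Periodic.hasFDerivAt_norm_rpow_smul_comp_arg_of_hasDerivAt_I_mul {g : ℝ → ℂ}
    (hper : Periodic g (2 * π)) {z : ℂ} (hz : z ≠ 0) {α κ : ℝ}
    (hg : HasDerivAt g (α * κ * I * g z.arg) z.arg) :
    HasFDerivAt (fun w : ℂ => ‖w‖ ^ α • g w.arg)
      ((‖z‖ ^ α * α) • g z.arg • (stretchCLM κ).comp (mul ℝ ℂ z⁻¹)) z := by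
  refine (hper.hasFDerivAt_norm_rpow_smul_comp_arg hz hg α).congr_fderiv ?_
  ext v
  simp only [add_apply, smul_apply, smulRight_apply, ContinuousLinearMap.comp_apply,
    reCLM_apply, imCLM_apply, stretchCLM_apply, real_smul, smul_eq_mul, ofReal_mul]
  ring

theorem opNorm_sq_generalized_stretching_general (α : ℝ)
    (k η₁ η₂ : ℝ → ℝ)
    (hk1 : ∀ θ, 1 ≤ k θ)
    (hη₁per : Function.Periodic η₁ (2 * Real.pi))
    (hη₂per : Function.Periodic η₂ (2 * Real.pi))
    (hη₁ : ∀ θ : ℝ, HasDerivAt η₁ (-(α * k θ * η₂ θ)) θ)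
    (hη₂ : ∀ θ : ℝ, HasDerivAt η₂ (α * k θ * η₁ θ) θ)
    (f : ℂ → ℂ)
    (hf : ∀ z : ℂ, f z =
      (↑(‖z‖ ^ α) : ℂ) * (↑(η₁ z.arg) + ↑(η₂ z.arg) * Complex.I)) :
    ∀ z : ℂ, z ≠ 0 → DifferentiableAt ℝ f z ∧
      ‖fderiv ℝ f z‖ ^ 2 =
        α ^ 2 * k z.arg ^ 2 * ‖z‖ ^ (2 * (α - 1)) *
          (η₁ z.arg ^ 2 + η₂ z.arg ^ 2) := by
  intro z hz
  set g : ℝ → ℂ := fun t => η₁ t + η₂ t * I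
  have hper : Periodic g (2 * π) := fun t => by simp only [g, hη₁per t, hη₂per t]
  have hg : HasDerivAt g (α * k z.arg * I * g z.arg) z.arg := by
    refine ((hη₁ z.arg).ofReal_comp.add ((hη₂ z.arg).ofReal_comp.mul_const I)).congr_deriv ?_
    push_cast
    linear_combination -(α * k z.arg * η₂ z.arg : ℂ) * I_sq
  have hfg : f = fun w : ℂ => ‖w‖ ^ α • g w.arg := funext fun w => by rw [hf, real_smul]
  have hD := hper.hasFDerivAt_norm_rpow_smul_comp_arg_of_hasDerivAt_I_mul hz hg
  rw [← hfg] at hD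
  refine ⟨hD.differentiableAt, ?_⟩
  rw [hD.fderiv, norm_smul, norm_smul, opNorm_comp_mul_apply, norm_stretchCLM,
    max_eq_right ((hk1 z.arg).trans (le_abs_self _)), norm_inv]
  have hρ : 0 < ‖z‖ := norm_pos_iff.mpr hz
  have hpow : ‖z‖ ^ (2 * (α - 1)) = (‖z‖ ^ α * ‖z‖⁻¹) ^ 2 := by
    rw [mul_comm, Real.rpow_mul hρ.le, Real.rpow_sub_one hρ.ne', Real.rpow_two, div_eq_mul_inv]
  have hg2 : ‖g z.arg‖ ^ 2 = η₁ z.arg ^ 2 + η₂ z.arg ^ 2 := by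
    rw [Complex.sq_norm, normSq_add_mul_I]
  rw [hpow, ← hg2, Real.norm_eq_abs]
  simp only [mul_pow, sq_abs]
  ring

/-- For `α > 0`, `k ≥ 1` a `2π`-periodic function and `η₁, η₂`
differentiable `2π`-periodic functions satisfying `η₁′ = −α k η₂`, `η₂′ = α k η₁`,
the map `f(z) = |z|^α (η₁(arg z) + i η₂(arg z))` satisfies, at every `z ≠ 0` with
`θ = arg z` and `ρ = |z|`,
`‖Df(z)‖² = α² k(θ)² ρ^{2(α−1)} (η₁(θ)² + η₂(θ)²)`. -/
theorem opNorm_sq_generalized_stretching (α : ℝ) (hα : 0 < α)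
    (k η₁ η₂ : ℝ → ℝ)
    (hk1 : ∀ θ, 1 ≤ k θ) (hkper : Function.Periodic k (2 * Real.pi))
    (hη₁per : Function.Periodic η₁ (2 * Real.pi))
    (hη₂per : Function.Periodic η₂ (2 * Real.pi))
    (hη₁ : ∀ θ : ℝ, HasDerivAt η₁ (-(α * k θ * η₂ θ)) θ)
    (hη₂ : ∀ θ : ℝ, HasDerivAt η₂ (α * k θ * η₁ θ) θ)
    (f : ℂ → ℂ)
    (hf : ∀ z : ℂ, f z =
      (↑(‖z‖ ^ α) : ℂ) * (↑(η₁ z.arg) + ↑(η₂ z.arg) * Complex.I)) :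
    ∀ z : ℂ, z ≠ 0 → DifferentiableAt ℝ f z ∧
      ‖fderiv ℝ f z‖ ^ 2 =
        α ^ 2 * k z.arg ^ 2 * ‖z‖ ^ (2 * (α - 1)) *
          (η₁ z.arg ^ 2 + η₂ z.arg ^ 2) :=
  opNorm_sq_generalized_stretching_general α k η₁ η₂ hk1 hη₁per hη₂per hη₁ hη₂ f hf
end

section
/- Let α > 0, let k : ℝ → ℝ be 2π-periodic with k ≥ 1, and let η₁, η₂ : ℝ → ℝ be differentiable 2π-periodic functions satisfying η₁′ = −α k η₂ and η₂′ = α k η₁ on ℝ. Define f(z) = |z|^α (η₁(θ) + i η₂(θ)) for z = ρ e^{iθ} ≠ 0. Then for every z = ρ e^{iθ} ≠ 0, the Jacobian determinant satisfies J_f(z) = det Df(z) = α² k(θ) ρ^{2(α−1)} (η₁(θ)² + η₂(θ)²). -/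
/-!
Write `E θ = η₁ θ + i η₂ θ` and `P u = e^{α Re u} E (Im u)`, so that `f = P ∘ log` away from `0`.
Since `E` is `2π`-periodic, `P` is `2πi`-periodic, so near any `z ≠ 0` the principal `log` may be
replaced by the branch `w ↦ log (w / z) + log z`, holomorphic at `z` with derivative `z⁻¹`; hence
`J_f(z) = J_P(log z) / |z|²`. The ODE `E' = i α k E` says that `DP(u)` sends `1 ↦ α P u` and
`i ↦ i α k P u`, so `J_P(u) = α² k |P u|²`, and `|P (log z)| = |z|^α |E (arg z)|`.
-/

open Complex
open scoped Real

theorem Complex.det_real_linearMap_eq (T : ℂ →ₗ[ℝ] ℂ) :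
    LinearMap.det T = (T 1).re * (T I).im - (T 1).im * (T I).re := by
  rw [← LinearMap.det_toMatrix basisOneI, Matrix.det_fin_two]
  simp [LinearMap.toMatrix_apply]
  ring

theorem Complex.det_smul_reCLM_add_imCLM (c : ℂ) (a b : ℝ) :
    LinearMap.det
      ((c • (a • ofRealCLM.comp reCLM + (b * I) • ofRealCLM.comp imCLM) : ℂ →L[ℝ] ℂ) :
        ℂ →ₗ[ℝ] ℂ) = a * b * normSq c := by
  rw [Complex.det_real_linearMap_eq]
  simp [normSq_apply]
  ring

theorem Complex.det_restrictScalars_toSpanSingleton (c : ℂ) :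
    LinearMap.det (((ContinuousLinearMap.toSpanSingleton ℂ c).restrictScalars ℝ : ℂ →L[ℝ] ℂ) :
      ℂ →ₗ[ℝ] ℂ) = normSq c := by
  rw [ContinuousLinearMap.coe_restrictScalars, LinearMap.det_restrictScalars]
  simp [Algebra.norm_complex_apply]

theorem Function.Periodic.comp_log_eq_comp_log_div_add {P : ℂ → ℂ}
    (hP : Function.Periodic P (2 * π * I)) {w z : ℂ} (hw : w ≠ 0) (hz : z ≠ 0) :
    P (log w) = P (log (w / z) + log z) := by
  obtain ⟨n, hn⟩ : ∃ n : ℤ, log w = log (w / z) + log z + n * (2 * π * I) := by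
    rw [← exp_eq_exp_iff_exists_int, Complex.exp_add, exp_log hw, exp_log (div_ne_zero hw hz),
      exp_log hz, div_mul_cancel₀ _ hz]
  rw [hn, hP.int_mul n]

theorem Function.Periodic.hasFDerivAt_comp_log {P : ℂ → ℂ} {D : ℂ →L[ℝ] ℂ}
    (hP : Function.Periodic P (2 * π * I)) {z : ℂ} (hz : z ≠ 0) (hD : HasFDerivAt P D (log z)) :
    HasFDerivAt (fun w ↦ P (log w))
      (D.comp ((ContinuousLinearMap.toSpanSingleton ℂ z⁻¹).restrictScalars ℝ)) z := by
  have hlog : HasDerivAt (fun w ↦ log (w / z) + log z) z⁻¹ z := by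
    have := ((Complex.hasDerivAt_log (by simp [div_self hz])).comp z
      ((hasDerivAt_id z).div_const z)).add_const (log z)
    simpa [div_self hz] using this
  have hD' : HasFDerivAt P D (log (z / z) + log z) := by simpa [div_self hz] using hD
  refine (hD'.comp z (hlog.hasFDerivAt.restrictScalars ℝ)).congr_of_eventuallyEq ?_
  filter_upwards [isOpen_compl_singleton.mem_nhds hz] with w hw
  exact hP.comp_log_eq_comp_log_div_add hw hz

/-- The map `ρ e^{iθ} ↦ ρ^α E θ`, written in the logarithmic coordinate `u = log ρ + i θ`. -/
noncomputable def logPolarMap (α : ℝ) (E : ℝ → ℂ) (u : ℂ) : ℂ :=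
  Real.exp (α * u.re) * E u.im

section LogPolarMap

variable (α : ℝ) {E : ℝ → ℂ}

theorem logPolarMap_log {w : ℂ} (hw : w ≠ 0) :
    logPolarMap α E (log w) = ((‖w‖ ^ α : ℝ) : ℂ) * E (arg w) := by
  rw [logPolarMap, log_re, log_im, Real.rpow_def_of_pos (norm_pos_iff.mpr hw), mul_comm α]

theorem Function.Periodic.logPolarMap (hE : Function.Periodic E (2 * π)) :
    Function.Periodic (logPolarMap α E) (2 * π * I) := by
  intro u
  simp [_root_.logPolarMap, hE u.im]

theorem hasFDerivAt_logPolarMap {κ : ℝ} {u : ℂ} (hE : HasDerivAt E (κ * I * E u.im) u.im) :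
    HasFDerivAt (logPolarMap α E)
      (logPolarMap α E u • (α • ofRealCLM.comp reCLM + (κ * I) • ofRealCLM.comp imCLM)) u := by
  have hexp : HasFDerivAt (fun v : ℂ ↦ (Real.exp (α * v.re) : ℂ))
      (ofRealCLM.comp (Real.exp (α * u.re) • α • reCLM)) u :=
    ofRealCLM.hasFDerivAt.comp u
      ((Real.hasDerivAt_exp _).comp_hasFDerivAt u (reCLM.hasFDerivAt.const_mul α))
  refine (hexp.mul (hE.hasFDerivAt.comp u imCLM.hasFDerivAt)).congr_fderiv ?_
  ext1 v
  simp [logPolarMap]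
  ring

end LogPolarMap

theorem jacobian_generalized_stretching_general (α : ℝ)
    (k η₁ η₂ : ℝ → ℝ)
    (hη₁per : Function.Periodic η₁ (2 * Real.pi))
    (hη₂per : Function.Periodic η₂ (2 * Real.pi))
    (hη₁ : ∀ θ : ℝ, HasDerivAt η₁ (-(α * k θ * η₂ θ)) θ)
    (hη₂ : ∀ θ : ℝ, HasDerivAt η₂ (α * k θ * η₁ θ) θ)
    (f : ℂ → ℂ)
    (hf : ∀ z : ℂ, f z =
      (↑(‖z‖ ^ α) : ℂ) * (↑(η₁ z.arg) + ↑(η₂ z.arg) * Complex.I)) :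
    ∀ z : ℂ, z ≠ 0 → DifferentiableAt ℝ f z ∧
      LinearMap.det (fderiv ℝ f z : ℂ →ₗ[ℝ] ℂ) =
        α ^ 2 * k z.arg * ‖z‖ ^ (2 * (α - 1)) *
          (η₁ z.arg ^ 2 + η₂ z.arg ^ 2) := by
  intro z hz
  set E : ℝ → ℂ := fun θ ↦ η₁ θ + η₂ θ * I
  have hEper : Function.Periodic E (2 * π) := fun θ ↦ by simp [E, hη₁per θ, hη₂per θ]
  have hE (θ : ℝ) : HasDerivAt E ((α * k θ : ℝ) * I * E θ) θ := by
    refine ((hη₁ θ).ofReal_comp.add ((hη₂ θ).ofReal_comp.mul_const I)).congr_deriv ?_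
    push_cast
    linear_combination (-(α * k θ * η₂ θ : ℂ)) * I_sq
  have hfE : f =ᶠ[nhds z] fun w ↦ logPolarMap α E (log w) := by
    filter_upwards [isOpen_compl_singleton.mem_nhds hz] with w hw
    rw [hf, logPolarMap_log α hw]
  have hD := (hEper.logPolarMap α).hasFDerivAt_comp_log hz (hasFDerivAt_logPolarMap α (hE _))
  refine ⟨hfE.differentiableAt_iff.2 hD.differentiableAt, ?_⟩
  have hpow : ‖z‖ ^ (2 * (α - 1)) = (‖z‖ ^ α) ^ 2 / ‖z‖ ^ 2 := by
    rw [mul_sub, mul_one, Real.rpow_sub (norm_pos_iff.mpr hz), mul_comm,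
      Real.rpow_mul (norm_nonneg z), Real.rpow_two, Real.rpow_two]
  rw [hfE.fderiv_eq, hD.fderiv, ContinuousLinearMap.toLinearMap_comp, LinearMap.det_comp,
    Complex.det_smul_reCLM_add_imCLM, Complex.det_restrictScalars_toSpanSingleton, log_im,
    logPolarMap_log α hz, map_mul, normSq_ofReal, map_inv₀, hpow, Complex.sq_norm,
    normSq_add_mul_I]
  ring

/-- For `α > 0`, `k ≥ 1` a `2π`-periodic function and `η₁, η₂`
differentiable `2π`-periodic functions satisfying `η₁′ = −α k η₂`, `η₂′ = α k η₁`,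
the map `f(z) = |z|^α (η₁(arg z) + i η₂(arg z))` satisfies, at every `z ≠ 0` with
`θ = arg z` and `ρ = |z|`,
`J_f(z) = det Df(z) = α² k(θ) ρ^{2(α−1)} (η₁(θ)² + η₂(θ)²)`. -/
theorem jacobian_generalized_stretching (α : ℝ) (hα : 0 < α)
    (k η₁ η₂ : ℝ → ℝ)
    (hk1 : ∀ θ, 1 ≤ k θ) (hkper : Function.Periodic k (2 * Real.pi))
    (hη₁per : Function.Periodic η₁ (2 * Real.pi))
    (hη₂per : Function.Periodic η₂ (2 * Real.pi))
    (hη₁ : ∀ θ : ℝ, HasDerivAt η₁ (-(α * k θ * η₂ θ)) θ)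
    (hη₂ : ∀ θ : ℝ, HasDerivAt η₂ (α * k θ * η₁ θ) θ)
    (f : ℂ → ℂ)
    (hf : ∀ z : ℂ, f z =
      (↑(‖z‖ ^ α) : ℂ) * (↑(η₁ z.arg) + ↑(η₂ z.arg) * Complex.I)) :
    ∀ z : ℂ, z ≠ 0 → DifferentiableAt ℝ f z ∧
      LinearMap.det (fderiv ℝ f z : ℂ →ₗ[ℝ] ℂ) =
        α ^ 2 * k z.arg * ‖z‖ ^ (2 * (α - 1)) *
          (η₁ z.arg ^ 2 + η₂ z.arg ^ 2) :=
  jacobian_generalized_stretching_general α k η₁ η₂ hη₁per hη₂per hη₁ hη₂ f hf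
end

section
/- Let M > 1, c = 2/(1 + M⁻¹) = 2M/(M + 1), and let Θ₁, Θ₂ be defined by the piecewise formulas: Θ₁(θ) = sin(c⁻¹θ − π/4) on [0, cπ/2), Θ₁(θ) = cos(c⁻¹M(θ − cπ/2) − π/4) on [cπ/2, π), Θ₁(θ) = −sin(c⁻¹(θ − π) − π/4) on [π, π + cπ/2), Θ₁(θ) = −cos(c⁻¹M(θ − π − cπ/2) − π/4) on [π + cπ/2, 2π); and Θ₂(θ) = −cos(c⁻¹θ − π/4) on [0, cπ/2), Θ₂(θ) = sin(c⁻¹M(θ − cπ/2) − π/4) on [cπ/2, π), Θ₂(θ) = cos(c⁻¹(θ − π) − π/4) on [π, π + cπ/2), Θ₂(θ) = −sin(c⁻¹M(θ − π − cπ/2) − π/4) on [π + cπ/2, 2π), extended 2π-periodically to ℝ. Let k₀ : ℝ → ℝ be the 2π-periodic function with k₀(θ) = 1 for θ ∈ [0, cπ/2) ∪ [π, π + cπ/2) and k₀(θ) = M otherwise on [0, 2π). Then for every θ ∈ (0, 2π) with θ ∉ {cπ/2, π, π + cπ/2}, Θ₁ and Θ₂ are differentiable at θ and satisfy Θ₁′(θ)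 = −c⁻¹ k₀(θ) Θ₂(θ) and Θ₂′(θ) = c⁻¹ k₀(θ) Θ₁(θ). -/
open Real Set Topology

/-! On each of the four open arcs cut out by `0, cπ/2, π, π + cπ/2` the pair `(Θ₁, Θ₂)` is,
up to a sign or a quarter turn, `(cos φ, sin φ)` with an affine phase `φ` of slope `c⁻¹ k₀`,
and every such pair solves the rotation system `u' = -ω v`, `v' = ω u`. Away from the
breakpoints the formulas hold on a neighbourhood, so the derivatives can be read off them. -/

def SolvesRotationAt (ω : ℝ) (u v : ℝ → ℝ) (x : ℝ) : Prop :=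
  HasDerivAt u (-(ω * v x)) x ∧ HasDerivAt v (ω * u x) x

section

variable {ω x : ℝ} {φ : ℝ → ℝ}

theorem solvesRotationAt_cos_sin (hφ : HasDerivAt φ ω x) :
    SolvesRotationAt ω (fun y => cos (φ y)) (fun y => sin (φ y)) x :=
  ⟨hφ.cos.congr_deriv (by ring), hφ.sin.congr_deriv (by ring)⟩

theorem solvesRotationAt_sin_neg_cos (hφ : HasDerivAt φ ω x) :
    SolvesRotationAt ω (fun y => sin (φ y)) (fun y => -cos (φ y)) x :=
  ⟨hφ.sin.congr_deriv (by ring), hφ.cos.neg.congr_deriv (by ring)⟩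

end

namespace SolvesRotationAt

variable {ω x : ℝ} {u v U V : ℝ → ℝ}

theorem neg (h : SolvesRotationAt ω u v x) :
    SolvesRotationAt ω (fun y => -u y) (fun y => -v y) x :=
  ⟨h.1.neg.congr_deriv (by ring), h.2.neg.congr_deriv (by ring)⟩

theorem rotate (h : SolvesRotationAt ω u v x) :
    SolvesRotationAt ω (fun y => -v y) u x :=
  ⟨h.2.neg, h.1.congr_deriv (by ring)⟩

theorem congr_of_eqOn {s : Set ℝ} (h : SolvesRotationAt ω U V x) (hs : s ∈ 𝓝 x)
    (hu : EqOn u U s) (hv : EqOn v V s) : SolvesRotationAt ω u v x := by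
  have hxs : x ∈ s := mem_of_mem_nhds hs
  refine ⟨?_, ?_⟩
  · rw [hv hxs]
    exact h.1.congr_of_eventuallyEq (hu.eventuallyEq_of_mem hs)
  · rw [hu hxs]
    exact h.2.congr_of_eventuallyEq (hv.eventuallyEq_of_mem hs)

end SolvesRotationAt

theorem piecewise_system_general (M c : ℝ)
    (Θ₁ Θ₂ k₀ : ℝ → ℝ)
    (hk₀1 : ∀ θ ∈ Ico 0 (c * π / 2) ∪ Ico π (π + c * π / 2), k₀ θ = 1)
    (hk₀M : ∀ θ ∈ Ico (0 : ℝ) (2 * π),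
      θ ∉ Ico 0 (c * π / 2) ∪ Ico π (π + c * π / 2) → k₀ θ = M)
    (hΘ₁a : ∀ θ ∈ Ico 0 (c * π / 2), Θ₁ θ = sin (c⁻¹ * θ - π / 4))
    (hΘ₁b : ∀ θ ∈ Ico (c * π / 2) π, Θ₁ θ = cos (c⁻¹ * M * (θ - c * π / 2) - π / 4))
    (hΘ₁c : ∀ θ ∈ Ico π (π + c * π / 2), Θ₁ θ = -sin (c⁻¹ * (θ - π) - π / 4))
    (hΘ₁d : ∀ θ ∈ Ico (π + c * π / 2) (2 * π),
      Θ₁ θ = -cos (c⁻¹ * M * (θ - π - c * π / 2) - π / 4))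
    (hΘ₂a : ∀ θ ∈ Ico 0 (c * π / 2), Θ₂ θ = -cos (c⁻¹ * θ - π / 4))
    (hΘ₂b : ∀ θ ∈ Ico (c * π / 2) π, Θ₂ θ = sin (c⁻¹ * M * (θ - c * π / 2) - π / 4))
    (hΘ₂c : ∀ θ ∈ Ico π (π + c * π / 2), Θ₂ θ = cos (c⁻¹ * (θ - π) - π / 4))
    (hΘ₂d : ∀ θ ∈ Ico (π + c * π / 2) (2 * π),
      Θ₂ θ = -sin (c⁻¹ * M * (θ - π - c * π / 2) - π / 4)) :
    ∀ θ ∈ Ioo (0 : ℝ) (2 * π), θ ≠ c * π / 2 → θ ≠ π → θ ≠ π + c * π / 2 →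
      HasDerivAt Θ₁ (-(c⁻¹ * k₀ θ * Θ₂ θ)) θ ∧
      HasDerivAt Θ₂ (c⁻¹ * k₀ θ * Θ₁ θ) θ := by
  intro θ ⟨h0, h2π⟩ hne₁ hne₂ hne₃
  show SolvesRotationAt (c⁻¹ * k₀ θ) Θ₁ Θ₂ θ
  have hkM : θ ∉ Ico 0 (c * π / 2) ∪ Ico π (π + c * π / 2) → k₀ θ = M :=
    hk₀M θ ⟨h0.le, h2π⟩
  rcases hne₁.lt_or_gt with ha | ha
  · rw [hk₀1 θ (.inl ⟨h0.le, ha⟩), mul_one]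
    have hφ : HasDerivAt (fun y => c⁻¹ * y - π / 4) c⁻¹ θ := by
      simpa using ((hasDerivAt_id θ).const_mul c⁻¹).sub_const (π / 4)
    exact (solvesRotationAt_sin_neg_cos hφ).congr_of_eqOn (Ico_mem_nhds h0 ha) hΘ₁a hΘ₂a
  rcases hne₂.lt_or_gt with hb | hb
  · rw [hkM (by rintro (⟨-, h⟩ | ⟨h, -⟩) <;> linarith)]
    have hφ : HasDerivAt (fun y => c⁻¹ * M * (y - c * π / 2) - π / 4) (c⁻¹ * M) θ := by
      simpa using (((hasDerivAt_id θ).sub_const _).const_mul (c⁻¹ * M)).sub_const (π / 4)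
    exact (solvesRotationAt_cos_sin hφ).congr_of_eqOn (Ico_mem_nhds ha hb) hΘ₁b hΘ₂b
  rcases hne₃.lt_or_gt with hc | hc
  · rw [hk₀1 θ (.inr ⟨hb.le, hc⟩), mul_one]
    have hφ : HasDerivAt (fun y => c⁻¹ * (y - π) - π / 4) c⁻¹ θ := by
      simpa using (((hasDerivAt_id θ).sub_const π).const_mul c⁻¹).sub_const (π / 4)
    exact (solvesRotationAt_cos_sin hφ).rotate.congr_of_eqOn (Ico_mem_nhds hb hc) hΘ₁c hΘ₂c
  · rw [hkM (by rintro (⟨-, h⟩ | ⟨-, h⟩) <;> linarith [pi_pos])]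
    have hφ : HasDerivAt (fun y => c⁻¹ * M * (y - π - c * π / 2) - π / 4) (c⁻¹ * M) θ := by
      simpa using ((((hasDerivAt_id θ).sub_const π).sub_const _).const_mul (c⁻¹ * M)).sub_const
        (π / 4)
    exact (solvesRotationAt_cos_sin hφ).neg.congr_of_eqOn (Ico_mem_nhds hc h2π) hΘ₁d hΘ₂d

/-- Let `M > 1`, `c = 2M/(M+1)`, and let `Θ₁, Θ₂, k₀` be the
`2π`-periodic functions given by the stated piecewise formulas on `[0, 2π)`.
Then for every `θ ∈ (0, 2π)` with `θ ∉ {cπ/2, π, π + cπ/2}`, `Θ₁` and `Θ₂`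
are differentiable at `θ` with `Θ₁′(θ) = −c⁻¹ k₀(θ) Θ₂(θ)` and
`Θ₂′(θ) = c⁻¹ k₀(θ) Θ₁(θ)`. -/
theorem piecewise_system (M c : ℝ) (hM : 1 < M) (hc : c = 2 / (1 + M⁻¹))
    (Θ₁ Θ₂ k₀ : ℝ → ℝ)
    (hΘ₁per : Function.Periodic Θ₁ (2 * π))
    (hΘ₂per : Function.Periodic Θ₂ (2 * π))
    (hk₀per : Function.Periodic k₀ (2 * π))
    (hk₀1 : ∀ θ ∈ Ico 0 (c * π / 2) ∪ Ico π (π + c * π / 2), k₀ θ = 1)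
    (hk₀M : ∀ θ ∈ Ico (0 : ℝ) (2 * π),
      θ ∉ Ico 0 (c * π / 2) ∪ Ico π (π + c * π / 2) → k₀ θ = M)
    (hΘ₁a : ∀ θ ∈ Ico 0 (c * π / 2), Θ₁ θ = sin (c⁻¹ * θ - π / 4))
    (hΘ₁b : ∀ θ ∈ Ico (c * π / 2) π, Θ₁ θ = cos (c⁻¹ * M * (θ - c * π / 2) - π / 4))
    (hΘ₁c : ∀ θ ∈ Ico π (π + c * π / 2), Θ₁ θ = -sin (c⁻¹ * (θ - π) - π / 4))
    (hΘ₁d : ∀ θ ∈ Ico (π + c * π / 2) (2 * π),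
      Θ₁ θ = -cos (c⁻¹ * M * (θ - π - c * π / 2) - π / 4))
    (hΘ₂a : ∀ θ ∈ Ico 0 (c * π / 2), Θ₂ θ = -cos (c⁻¹ * θ - π / 4))
    (hΘ₂b : ∀ θ ∈ Ico (c * π / 2) π, Θ₂ θ = sin (c⁻¹ * M * (θ - c * π / 2) - π / 4))
    (hΘ₂c : ∀ θ ∈ Ico π (π + c * π / 2), Θ₂ θ = cos (c⁻¹ * (θ - π) - π / 4))
    (hΘ₂d : ∀ θ ∈ Ico (π + c * π / 2) (2 * π),
      Θ₂ θ = -sin (c⁻¹ * M * (θ - π - c * π / 2) - π / 4)) :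
    ∀ θ ∈ Ioo (0 : ℝ) (2 * π), θ ≠ c * π / 2 → θ ≠ π → θ ≠ π + c * π / 2 →
      HasDerivAt Θ₁ (-(c⁻¹ * k₀ θ * Θ₂ θ)) θ ∧
      HasDerivAt Θ₂ (c⁻¹ * k₀ θ * Θ₁ θ) θ :=
  piecewise_system_general M c Θ₁ Θ₂ k₀ hk₀1 hk₀M hΘ₁a hΘ₁b hΘ₁c hΘ₁d hΘ₂a hΘ₂b hΘ₂c hΘ₂d
end

section
/- Let M > 1, c = 2/(1 + M⁻¹) = 2M/(M + 1), and let Θ₁, Θ₂ : [0, 2π) → ℝ be defined by the piecewise formulas: Θ₁(θ) = sin(c⁻¹θ − π/4) on [0, cπ/2), Θ₁(θ) = cos(c⁻¹M(θ − cπ/2) − π/4) on [cπ/2, π), Θ₁(θ) = −sin(c⁻¹(θ − π) − π/4) on [π, π + cπ/2), Θ₁(θ) = −cos(c⁻¹M(θ − π − cπ/2) − π/4) on [π + cπ/2, 2π); and Θ₂(θ) = −cos(c⁻¹θ − π/4) on [0, cπ/2), Θ₂(θ) = sin(c⁻¹M(θ − cπ/2) − π/4) on [cπ/2, π), Θ₂(θ)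 = cos(c⁻¹(θ − π) − π/4) on [π, π + cπ/2), Θ₂(θ) = −sin(c⁻¹M(θ − π − cπ/2) − π/4) on [π + cπ/2, 2π). Then the 2π-periodic extensions of Θ₁ and Θ₂ to ℝ are Lipschitz continuous; in particular the one-sided limits of the piecewise formulas agree at θ = cπ/2, π, π + cπ/2 and 2π. -/
open Real Set

private lemma lip_glue {f : ℝ → ℝ} {K : NNReal} {a b c : ℝ}
    (h1 : LipschitzOnWith K f (Icc a b)) (h2 : LipschitzOnWith K f (Icc b c)) :
    LipschitzOnWith K f (Icc a c) := by
  rcases le_total b a with hba | hab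
  · exact h2.mono (Icc_subset_Icc hba le_rfl)
  rcases le_total c b with hcb | hbc
  · exact h1.mono (Icc_subset_Icc le_rfl hcb)
  rw [lipschitzOnWith_iff_dist_le_mul] at h1 h2 ⊢
  have key : ∀ x ∈ Icc a c, ∀ y ∈ Icc a c, x ≤ y →
      dist (f x) (f y) ≤ K * dist x y := by
    intro x hx y hy hxy
    rcases le_total y b with hyb | hby
    · exact h1 x ⟨hx.1, hxy.trans hyb⟩ y ⟨hy.1, hyb⟩
    rcases le_total b x with hbx | hxb
    · exact h2 x ⟨hbx, hx.2⟩ y ⟨hby, hy.2⟩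
    · have d1 := h1 x ⟨hx.1, hxb⟩ b ⟨hab, le_rfl⟩
      have d2 := h2 b ⟨le_rfl, hbc⟩ y ⟨hby, hy.2⟩
      have tri := dist_triangle (f x) (f b) (f y)
      have hxy' : dist x y = dist x b + dist b y := by
        rw [Real.dist_eq, Real.dist_eq, Real.dist_eq,
          abs_of_nonpos (by linarith : x - y ≤ 0),
          abs_of_nonpos (by linarith : x - b ≤ 0),
          abs_of_nonpos (by linarith : b - y ≤ 0)]
        ring
      calc dist (f x) (f y) ≤ dist (f x) (f b) + dist (f b) (f y) := tri
        _ ≤ ↑K * dist x b + ↑K * dist b y := add_le_add d1 d2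
        _ = ↑K * dist x y := by rw [hxy']; ring
  intro x hx y hy
  rcases le_total x y with h | h
  · exact key x hx y hy h
  · rw [dist_comm (f x) (f y), dist_comm x y]; exact key y hy x hx h

private lemma lip_periodic {f : ℝ → ℝ} {K : NNReal} {T : ℝ} (hT : 0 < T)
    (hper : Function.Periodic f T) (h : LipschitzOnWith K f (Icc 0 T)) :
    LipschitzWith K f := by
  have hshift : ∀ n : ℤ, LipschitzOnWith K f (Icc ((n : ℝ) * T) ((n : ℝ) * T + T)) := by
    intro n
    rw [lipschitzOnWith_iff_dist_le_mul] at h ⊢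
    intro x hx y hy
    have hx' : x - (n : ℝ) * T ∈ Icc (0 : ℝ) T := ⟨by linarith [hx.1], by linarith [hx.2]⟩
    have hy' : y - (n : ℝ) * T ∈ Icc (0 : ℝ) T := ⟨by linarith [hy.1], by linarith [hy.2]⟩
    have := h (x - (n : ℝ) * T) hx' (y - (n : ℝ) * T) hy'
    rw [hper.sub_int_mul_eq n, hper.sub_int_mul_eq n, dist_sub_right] at this
    exact this
  have hIcc : ∀ n : ℕ, LipschitzOnWith K f (Icc (-((n : ℝ) * T)) ((n : ℝ) * T)) := by
    intro n
    induction n with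
    | zero =>
      simp only [Nat.cast_zero, zero_mul, neg_zero]
      exact h.mono (Icc_subset_Icc le_rfl hT.le)
    | succ n ih =>
      have hl : LipschitzOnWith K f (Icc (-(((n : ℝ) + 1) * T)) (-((n : ℝ) * T))) := by
        have := hshift (-(n + 1) : ℤ)
        have e1 : ((-(n + 1) : ℤ) : ℝ) * T = -(((n : ℝ) + 1) * T) := by push_cast; ring
        have e2 : ((-(n + 1) : ℤ) : ℝ) * T + T = -((n : ℝ) * T) := by push_cast; ring
        rwa [e2, e1] at this
      have hr : LipschitzOnWith K f (Icc ((n : ℝ) * T) (((n : ℝ) + 1) * T)) := by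
        have := hshift (n : ℤ)
        have e1 : (((n : ℤ) : ℝ)) * T = (n : ℝ) * T := by push_cast; ring
        have e2 : (((n : ℤ) : ℝ)) * T + T = ((n : ℝ) + 1) * T := by push_cast; ring
        rwa [e2, e1] at this
      have : LipschitzOnWith K f (Icc (-(((n : ℝ) + 1) * T)) (((n : ℝ) + 1) * T)) :=
        lip_glue (lip_glue hl ih) hr
      have e : ((n + 1 : ℕ) : ℝ) = (n : ℝ) + 1 := by push_cast; ring
      rwa [e]
  rw [lipschitzWith_iff_dist_le_mul]
  intro x y
  obtain ⟨n, hn⟩ := exists_nat_ge (max |x| |y| / T)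
  have hnT : max |x| |y| ≤ (n : ℝ) * T := by
    rw [div_le_iff₀ hT] at hn; linarith
  have hx : x ∈ Icc (-((n : ℝ) * T)) ((n : ℝ) * T) :=
    abs_le.mp (le_trans (le_max_left _ _) hnT)
  have hy : y ∈ Icc (-((n : ℝ) * T)) ((n : ℝ) * T) :=
    abs_le.mp (le_trans (le_max_right _ _) hnT)
  exact lipschitzOnWith_iff_dist_le_mul.mp (hIcc n) x hx y hy

private lemma sin_lip (x y : ℝ) : |Real.sin x - Real.sin y| ≤ |x - y| := by
  rw [Real.sin_sub_sin]
  have h1 : |Real.sin ((x - y) / 2)| ≤ |(x - y) / 2| := Real.abs_sin_le_abs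
  have h2 : |Real.cos ((x + y) / 2)| ≤ 1 := Real.abs_cos_le_one _
  have h0 : (0 : ℝ) ≤ |Real.sin ((x - y) / 2)| := abs_nonneg _
  calc |2 * Real.sin ((x - y) / 2) * Real.cos ((x + y) / 2)|
      = 2 * |Real.sin ((x - y) / 2)| * |Real.cos ((x + y) / 2)| := by
        rw [abs_mul, abs_mul, abs_two]
    _ ≤ 2 * |(x - y) / 2| * 1 := by
        nlinarith [abs_nonneg (Real.cos ((x + y) / 2)), abs_nonneg ((x - y) / 2)]
    _ = |x - y| := by rw [abs_div, abs_two]; ring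

private lemma cos_lip (x y : ℝ) : |Real.cos x - Real.cos y| ≤ |x - y| := by
  rw [Real.cos_sub_cos]
  have h1 : |Real.sin ((x - y) / 2)| ≤ |(x - y) / 2| := Real.abs_sin_le_abs
  have h2 : |Real.sin ((x + y) / 2)| ≤ 1 := Real.abs_sin_le_one _
  have h0 : (0 : ℝ) ≤ |Real.sin ((x - y) / 2)| := abs_nonneg _
  calc |(-2) * Real.sin ((x + y) / 2) * Real.sin ((x - y) / 2)|
      = 2 * |Real.sin ((x - y) / 2)| * |Real.sin ((x + y) / 2)| := by
        rw [show (-2 : ℝ) * Real.sin ((x + y) / 2) * Real.sin ((x - y) / 2)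
            = -(2 * Real.sin ((x - y) / 2) * Real.sin ((x + y) / 2)) by ring,
          abs_neg, abs_mul, abs_mul, abs_two]
    _ ≤ 2 * |(x - y) / 2| * 1 := by
        nlinarith [abs_nonneg (Real.sin ((x + y) / 2)), abs_nonneg ((x - y) / 2)]
    _ = |x - y| := by rw [abs_div, abs_two]; ring

private lemma neg_sin_lip (x y : ℝ) : |(-Real.sin x) - (-Real.sin y)| ≤ |x - y| := by
  rw [show -Real.sin x - -Real.sin y = -(Real.sin x - Real.sin y) by ring, abs_neg]
  exact sin_lip x y

private lemma neg_cos_lip (x y : ℝ) : |(-Real.cos x) - (-Real.cos y)| ≤ |x - y| := by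
  rw [show -Real.cos x - -Real.cos y = -(Real.cos x - Real.cos y) by ring, abs_neg]
  exact cos_lip x y

private lemma lip_of_affine {t u : ℝ → ℝ} (ht : ∀ a b, |t a - t b| ≤ |a - b|)
    {A L : ℝ} (hu : ∀ x y, u x - u y = A * (x - y)) (hL : |A| ≤ L) :
    LipschitzWith L.toNNReal (fun θ => t (u θ)) := by
  have hL0 : 0 ≤ L := (abs_nonneg A).trans hL
  rw [lipschitzWith_iff_dist_le_mul]
  intro x y
  rw [Real.coe_toNNReal _ hL0, Real.dist_eq, Real.dist_eq]
  calc |t (u x) - t (u y)| ≤ |u x - u y| := ht _ _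
    _ = |A| * |x - y| := by rw [hu, abs_mul]
    _ ≤ L * |x - y| := mul_le_mul_of_nonneg_right hL (abs_nonneg _)

private lemma lipOn_of_eqOn {f g : ℝ → ℝ} {K : NNReal} {s : Set ℝ}
    (hg : LipschitzWith K g) (h : Set.EqOn f g s) : LipschitzOnWith K f s := by
  intro x hx y hy
  rw [h hx, h hy]
  exact hg _ _

/-- Let `M > 1`, `c = 2M/(M+1)`, and let `Θ₁, Θ₂` be the
`2π`-periodic extensions to `ℝ` of the functions given by the stated piecewise
formulas on `[0, 2π)`. Then `Θ₁` and `Θ₂` are Lipschitz continuous. -/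
theorem piecewise_lipschitz (M c : ℝ) (hM : 1 < M) (hc : c = 2 / (1 + M⁻¹))
    (Θ₁ Θ₂ : ℝ → ℝ)
    (hΘ₁per : Function.Periodic Θ₁ (2 * π))
    (hΘ₂per : Function.Periodic Θ₂ (2 * π))
    (hΘ₁a : ∀ θ ∈ Ico 0 (c * π / 2), Θ₁ θ = sin (c⁻¹ * θ - π / 4))
    (hΘ₁b : ∀ θ ∈ Ico (c * π / 2) π, Θ₁ θ = cos (c⁻¹ * M * (θ - c * π / 2) - π / 4))
    (hΘ₁c : ∀ θ ∈ Ico π (π + c * π / 2), Θ₁ θ = -sin (c⁻¹ * (θ - π) - π / 4))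
    (hΘ₁d : ∀ θ ∈ Ico (π + c * π / 2) (2 * π),
      Θ₁ θ = -cos (c⁻¹ * M * (θ - π - c * π / 2) - π / 4))
    (hΘ₂a : ∀ θ ∈ Ico 0 (c * π / 2), Θ₂ θ = -cos (c⁻¹ * θ - π / 4))
    (hΘ₂b : ∀ θ ∈ Ico (c * π / 2) π, Θ₂ θ = sin (c⁻¹ * M * (θ - c * π / 2) - π / 4))
    (hΘ₂c : ∀ θ ∈ Ico π (π + c * π / 2), Θ₂ θ = cos (c⁻¹ * (θ - π) - π / 4))
    (hΘ₂d : ∀ θ ∈ Ico (π + c * π / 2) (2 * π),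
      Θ₂ θ = -sin (c⁻¹ * M * (θ - π - c * π / 2) - π / 4)) :
    ∃ L : NNReal, LipschitzWith L Θ₁ ∧ LipschitzWith L Θ₂ := by
  have hM0 : (0 : ℝ) < M := lt_trans one_pos hM
  have hM0' : M ≠ 0 := ne_of_gt hM0
  have hMinv : (0 : ℝ) < 1 + M⁻¹ := by positivity
  have hc0 : 0 < c := by rw [hc]; positivity
  have hcne : c ≠ 0 := ne_of_gt hc0
  have hπ := Real.pi_pos
  have hMinvlt : M⁻¹ < 1 := by
    rw [inv_lt_one_iff₀]; right; exact hM
  have hclt2 : c < 2 := by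
    rw [hc, div_lt_iff₀ hMinv]; nlinarith [inv_pos.mpr hM0]
  have h0c : (0 : ℝ) < c * π / 2 := by positivity
  have hcπ : c * π / 2 < π := by nlinarith
  have key1 : c⁻¹ * (c * π / 2) = π / 2 := by
    field_simp
  have hcinv : c⁻¹ = (1 + M⁻¹) / 2 := by
    rw [hc]
    field_simp
  have hMcinv : c⁻¹ * M = (M + 1) / 2 := by
    have hMM : M⁻¹ * M = 1 := inv_mul_cancel₀ hM0'
    rw [hcinv]
    field_simp
  have key2 : c⁻¹ * M * (π - c * π / 2) = π / 2 := by
    have hsplit : c⁻¹ * M * (π - c * π / 2) = c⁻¹ * M * π - M * (c⁻¹ * (c * π / 2)) := by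
      ring
    rw [hsplit, key1, hMcinv]
    ring
  -- Lipschitz constant
  set L : ℝ := (M + 1) / 2 with hL
  have hL0 : (0 : ℝ) ≤ L := by positivity
  have hA1 : |c⁻¹| ≤ L := by
    rw [abs_of_pos (inv_pos.mpr hc0), hcinv, hL]
    have : M⁻¹ ≤ M := le_trans hMinvlt.le hM.le
    linarith
  have hA2 : |c⁻¹ * M| ≤ L := by
    rw [hMcinv, abs_of_nonneg (by positivity : (0:ℝ) ≤ (M + 1) / 2)]
  -- Lipschitz for each piece formula (as global functions)
  have lg1 : LipschitzWith L.toNNReal (fun θ => Real.sin (c⁻¹ * θ - π / 4)) :=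
    lip_of_affine sin_lip (fun x y => by ring) hA1
  have lg2 : LipschitzWith L.toNNReal
      (fun θ => Real.cos (c⁻¹ * M * (θ - c * π / 2) - π / 4)) :=
    lip_of_affine cos_lip (fun x y => by ring) hA2
  have lg3 : LipschitzWith L.toNNReal (fun θ => -Real.sin (c⁻¹ * (θ - π) - π / 4)) :=
    lip_of_affine (t := fun x => -Real.sin x) (u := fun θ => c⁻¹ * (θ - π) - π / 4)
      neg_sin_lip (fun x y => by ring) hA1
  have lg4 : LipschitzWith L.toNNReal
      (fun θ => -Real.cos (c⁻¹ * M * (θ - π - c * π / 2) - π / 4)) :=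
    lip_of_affine (t := fun x => -Real.cos x)
      (u := fun θ => c⁻¹ * M * (θ - π - c * π / 2) - π / 4)
      neg_cos_lip (fun x y => by ring) hA2
  have lg1' : LipschitzWith L.toNNReal (fun θ => -Real.cos (c⁻¹ * θ - π / 4)) :=
    lip_of_affine (t := fun x => -Real.cos x) (u := fun θ => c⁻¹ * θ - π / 4)
      neg_cos_lip (fun x y => by ring) hA1
  have lg2' : LipschitzWith L.toNNReal
      (fun θ => Real.sin (c⁻¹ * M * (θ - c * π / 2) - π / 4)) :=
    lip_of_affine sin_lip (fun x y => by ring) hA2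
  have lg3' : LipschitzWith L.toNNReal (fun θ => Real.cos (c⁻¹ * (θ - π) - π / 4)) :=
    lip_of_affine cos_lip (fun x y => by ring) hA1
  have lg4' : LipschitzWith L.toNNReal
      (fun θ => -Real.sin (c⁻¹ * M * (θ - π - c * π / 2) - π / 4)) :=
    lip_of_affine (t := fun x => -Real.sin x)
      (u := fun θ => c⁻¹ * M * (θ - π - c * π / 2) - π / 4)
      neg_sin_lip (fun x y => by ring) hA2
  -- useful endpoint memberships
  have hmb : c * π / 2 ∈ Ico (c * π / 2) π := ⟨le_rfl, hcπ⟩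
  have hmc : π ∈ Ico π (π + c * π / 2) := ⟨le_rfl, by linarith⟩
  have hmd : π + c * π / 2 ∈ Ico (π + c * π / 2) (2 * π) := ⟨le_rfl, by linarith⟩
  have hma : (0 : ℝ) ∈ Ico (0 : ℝ) (c * π / 2) := ⟨le_rfl, h0c⟩
  have hpi4 : π / 2 - π / 4 = π / 4 := by ring
  -- EqOn facts for Θ₁
  have e1 : EqOn Θ₁ (fun θ => Real.sin (c⁻¹ * θ - π / 4)) (Icc 0 (c * π / 2)) := by
    intro θ hθ
    rcases lt_or_eq_of_le hθ.2 with h | h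
    · exact hΘ₁a θ ⟨hθ.1, h⟩
    · subst h
      rw [hΘ₁b _ hmb]
      simp only [sub_self, mul_zero, zero_sub, Real.cos_neg, key1, hpi4,
        Real.cos_pi_div_four, Real.sin_pi_div_four]
  have e2 : EqOn Θ₁ (fun θ => Real.cos (c⁻¹ * M * (θ - c * π / 2) - π / 4))
      (Icc (c * π / 2) π) := by
    intro θ hθ
    rcases lt_or_eq_of_le hθ.2 with h | h
    · exact hΘ₁b θ ⟨hθ.1, h⟩
    · subst h
      rw [hΘ₁c _ hmc]
      simp only [sub_self, mul_zero, zero_sub, Real.sin_neg, key2, hpi4,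
        Real.cos_pi_div_four, Real.sin_pi_div_four, neg_neg]
  have e3 : EqOn Θ₁ (fun θ => -Real.sin (c⁻¹ * (θ - π) - π / 4))
      (Icc π (π + c * π / 2)) := by
    intro θ hθ
    rcases lt_or_eq_of_le hθ.2 with h | h
    · exact hΘ₁c θ ⟨hθ.1, h⟩
    · subst h
      rw [hΘ₁d _ hmd, show π + c * π / 2 - π - c * π / 2 = (0:ℝ) by ring]
      have : c⁻¹ * (π + c * π / 2 - π) = π / 2 := by
        rw [show π + c * π / 2 - π = c * π / 2 by ring, key1]
      simp only [sub_self, mul_zero, zero_sub, Real.cos_neg, this, hpi4,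
        Real.cos_pi_div_four, Real.sin_pi_div_four]
  have e4 : EqOn Θ₁ (fun θ => -Real.cos (c⁻¹ * M * (θ - π - c * π / 2) - π / 4))
      (Icc (π + c * π / 2) (2 * π)) := by
    intro θ hθ
    rcases lt_or_eq_of_le hθ.2 with h | h
    · exact hΘ₁d θ ⟨hθ.1, h⟩
    · subst h
      have h2π : Θ₁ (2 * π) = Θ₁ 0 := by
        have := hΘ₁per 0; rwa [zero_add] at this
      rw [h2π, hΘ₁a 0 hma]
      have : c⁻¹ * M * (2 * π - π - c * π / 2) = π / 2 := by
        rw [show 2 * π - π - c * π / 2 = π - c * π / 2 by ring, key2]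
      simp only [mul_zero, zero_sub, Real.sin_neg, this, hpi4,
        Real.cos_pi_div_four, Real.sin_pi_div_four]
  -- EqOn facts for Θ₂
  have f1 : EqOn Θ₂ (fun θ => -Real.cos (c⁻¹ * θ - π / 4)) (Icc 0 (c * π / 2)) := by
    intro θ hθ
    rcases lt_or_eq_of_le hθ.2 with h | h
    · exact hΘ₂a θ ⟨hθ.1, h⟩
    · subst h
      rw [hΘ₂b _ hmb]
      simp only [sub_self, mul_zero, zero_sub, Real.sin_neg, key1, hpi4,
        Real.cos_pi_div_four, Real.sin_pi_div_four]
  have f2 : EqOn Θ₂ (fun θ => Real.sin (c⁻¹ * M * (θ - c * π / 2) - π / 4))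
      (Icc (c * π / 2) π) := by
    intro θ hθ
    rcases lt_or_eq_of_le hθ.2 with h | h
    · exact hΘ₂b θ ⟨hθ.1, h⟩
    · subst h
      rw [hΘ₂c _ hmc]
      simp only [sub_self, mul_zero, zero_sub, Real.cos_neg, key2, hpi4,
        Real.cos_pi_div_four, Real.sin_pi_div_four]
  have f3 : EqOn Θ₂ (fun θ => Real.cos (c⁻¹ * (θ - π) - π / 4))
      (Icc π (π + c * π / 2)) := by
    intro θ hθ
    rcases lt_or_eq_of_le hθ.2 with h | h
    · exact hΘ₂c θ ⟨hθ.1, h⟩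
    · subst h
      rw [hΘ₂d _ hmd, show π + c * π / 2 - π - c * π / 2 = (0:ℝ) by ring]
      have : c⁻¹ * (π + c * π / 2 - π) = π / 2 := by
        rw [show π + c * π / 2 - π = c * π / 2 by ring, key1]
      simp only [sub_self, mul_zero, zero_sub, Real.sin_neg, this, hpi4,
        Real.cos_pi_div_four, Real.sin_pi_div_four, neg_neg]
  have f4 : EqOn Θ₂ (fun θ => -Real.sin (c⁻¹ * M * (θ - π - c * π / 2) - π / 4))
      (Icc (π + c * π / 2) (2 * π)) := by
    intro θ hθ
    rcases lt_or_eq_of_le hθ.2 with h | h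
    · exact hΘ₂d θ ⟨hθ.1, h⟩
    · subst h
      have h2π : Θ₂ (2 * π) = Θ₂ 0 := by
        have := hΘ₂per 0; rwa [zero_add] at this
      rw [h2π, hΘ₂a 0 hma]
      have : c⁻¹ * M * (2 * π - π - c * π / 2) = π / 2 := by
        rw [show 2 * π - π - c * π / 2 = π - c * π / 2 by ring, key2]
      simp only [mul_zero, zero_sub, Real.cos_neg, this, hpi4,
        Real.cos_pi_div_four, Real.sin_pi_div_four]
  -- glue
  have lΘ₁ : LipschitzOnWith L.toNNReal Θ₁ (Icc 0 (2 * π)) :=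
    lip_glue (lip_glue (lip_glue (lipOn_of_eqOn lg1 e1) (lipOn_of_eqOn lg2 e2))
      (lipOn_of_eqOn lg3 e3)) (lipOn_of_eqOn lg4 e4)
  have lΘ₂ : LipschitzOnWith L.toNNReal Θ₂ (Icc 0 (2 * π)) :=
    lip_glue (lip_glue (lip_glue (lipOn_of_eqOn lg1' f1) (lipOn_of_eqOn lg2' f2))
      (lipOn_of_eqOn lg3' f3)) (lipOn_of_eqOn lg4' f4)
  have h2π : (0 : ℝ) < 2 * π := by positivity
  exact ⟨L.toNNReal, lip_periodic h2π hΘ₁per lΘ₁, lip_periodic h2π hΘ₂per lΘ₂⟩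
end

section
/- Let M > 1, c = 2M/(M + 1), and let k₀ : ℝ → ℝ be the 2π-periodic function with k₀(θ) = 1 for θ ∈ [0, cπ/2) ∪ [π, π + cπ/2) and k₀(θ) = M otherwise on [0, 2π). Then (1/(2π)) ∫₀^{2π} k₀(θ) dθ = c. Consequently, for the Beltrami coefficient μ₀(z) = ((1 − k₀(arg z))/(1 + k₀(arg z))) z z̄⁻¹ and for every circle S_ρ(0) of radius ρ > 0 centered at the origin, the average over S_ρ(0) of K_{μ₀} − 2(|μ₀| + Re(μ₀ n̄²))/(1 − |μ₀|²) equals c, where n = n(ξ) = ξ/|ξ| is the outer unit normal at ξ ∈ S_ρ(0) and K_{μ₀} = (1 + |μ₀|)/(1 − |μ₀|). -/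
/-!
On the circle `|ξ| = ρ` the coefficient `μ₀` has the form `r ξ ξ̄⁻¹` with `r = (1 - k)/(1 + k)` real
and `k = k₀(arg ξ) > 0`, so `|μ₀| = |r|` and `μ₀ n̄² = r`. For `|r| < 1` the integrand
`(1 + |r|)/(1 - |r|) - 2(|r| + r)/(1 - r²)` collapses to `(1 - r)/(1 + r) = k` (check the signs of
`r` separately), so the circle average of the integrand is the average of `k₀`, which is computed
piece by piece on the four intervals where `k₀` is constant.
-/

open Real Set MeasureTheory ComplexConjugate

section StepIntegral

variable {E : Type*} [NormedAddCommGroup E] {f : ℝ → E} {C : E} {a b : ℝ}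

theorem intervalIntegrable_of_eqOn_Ico (hab : a ≤ b) (h : EqOn f (fun _ => C) (Ico a b)) :
    IntervalIntegrable f volume a b := by
  rw [intervalIntegrable_iff_integrableOn_Ico_of_le hab]
  exact (integrableOn_const measure_Ico_lt_top.ne).congr_fun h.symm measurableSet_Ico

theorem integral_of_eqOn_Ico [NormedSpace ℝ E] [CompleteSpace E] (hab : a ≤ b)
    (h : EqOn f (fun _ => C) (Ico a b)) :
    ∫ x in a..b, f x = (b - a) • C := by
  rw [intervalIntegral.integral_of_le hab, ← integral_Ico_eq_integral_Ioc,
    setIntegral_congr_fun measurableSet_Ico h, setIntegral_const, volume_real_Ico_of_le hab]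

end StepIntegral

theorem integral_two_valued_step_eq {f : ℝ → ℝ} {p s u v : ℝ} (hs : 0 ≤ s) (hsp : s ≤ p)
    (hu : ∀ θ ∈ Ico 0 s ∪ Ico p (p + s), f θ = u)
    (hv : ∀ θ ∈ Ico 0 (2 * p), θ ∉ Ico 0 s ∪ Ico p (p + s) → f θ = v) :
    ∫ θ in (0 : ℝ)..(2 * p), f θ = 2 * s * u + (2 * p - 2 * s) * v := by
  have h₁ : EqOn f (fun _ => u) (Ico 0 s) := fun θ hθ => hu θ (Or.inl hθ)
  have h₂ : EqOn f (fun _ => v) (Ico s p) := fun θ hθ =>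
    hv θ ⟨hs.trans hθ.1, by linarith [hθ.2]⟩ (by rintro (h | h) <;> linarith [h.1, h.2, hθ.1, hθ.2])
  have h₃ : EqOn f (fun _ => u) (Ico p (p + s)) := fun θ hθ => hu θ (Or.inr hθ)
  have h₄ : EqOn f (fun _ => v) (Ico (p + s) (2 * p)) := fun θ hθ =>
    hv θ ⟨by linarith [hθ.1], hθ.2⟩ (by rintro (h | h) <;> linarith [h.1, h.2, hθ.1, hθ.2])
  have hps : p ≤ p + s := by linarith
  have hsp' : p + s ≤ 2 * p := by linarith
  have i₁ := intervalIntegrable_of_eqOn_Ico hs h₁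
  have i₂ := intervalIntegrable_of_eqOn_Ico hsp h₂
  have i₃ := intervalIntegrable_of_eqOn_Ico hps h₃
  have i₄ := intervalIntegrable_of_eqOn_Ico hsp' h₄
  rw [← intervalIntegral.integral_add_adjacent_intervals ((i₁.trans i₂).trans i₃) i₄,
    ← intervalIntegral.integral_add_adjacent_intervals (i₁.trans i₂) i₃,
    ← intervalIntegral.integral_add_adjacent_intervals i₁ i₂, integral_of_eqOn_Ico hs h₁,
    integral_of_eqOn_Ico hsp h₂, integral_of_eqOn_Ico hps h₃, integral_of_eqOn_Ico hsp' h₄]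
  simp only [smul_eq_mul]
  ring

theorem Function.Periodic.apply_arg_ofReal_mul_exp {α : Type*} {f : ℝ → α}
    (hf : Function.Periodic f (2 * π)) {ρ : ℝ} (hρ : 0 < ρ) (t : ℝ) :
    f (ρ * Complex.exp (t * Complex.I)).arg = f t := by
  rw [Complex.arg_real_mul _ hρ, Complex.arg_exp_mul_I,
    ← self_sub_toIocDiv_zsmul two_pi_pos (-π) t, hf.sub_zsmul_eq]

theorem norm_ofReal_mul_mul_inv_conj (r : ℝ) {z : ℂ} (hz : z ≠ 0) :
    ‖(r : ℂ) * z * (conj z)⁻¹‖ = |r| := by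
  rw [norm_mul, norm_mul, norm_inv, Complex.norm_conj, Complex.norm_real, Real.norm_eq_abs,
    mul_inv_cancel_right₀ (norm_ne_zero_iff.mpr hz)]

theorem ofReal_mul_mul_inv_conj_mul_conj_sq (r : ℝ) {z : ℂ} (hz : z ≠ 0) :
    (r : ℂ) * z * (conj z)⁻¹ * conj (z / ‖z‖) ^ 2 = r := by
  have hconj : conj z ≠ 0 := (map_ne_zero _).mpr hz
  have hnorm : ((‖z‖ : ℝ) : ℂ) ≠ 0 := by exact_mod_cast norm_ne_zero_iff.mpr hz
  have hsq : z * conj z = ((‖z‖ : ℝ) : ℂ) ^ 2 := by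
    rw [Complex.mul_conj, Complex.normSq_eq_norm_sq, Complex.ofReal_pow]
  rw [map_div₀, Complex.conj_ofReal, div_pow, ← hsq]
  field_simp

theorem distortion_sub_eq_of_abs_lt_one {r : ℝ} (hr : |r| < 1) :
    (1 + |r|) / (1 - |r|) - 2 * (|r| + r) / (1 - |r| ^ 2) = (1 - r) / (1 + r) := by
  rcases le_or_gt 0 r with hr0 | hr0
  · rw [abs_of_nonneg hr0] at hr ⊢
    have h₁ : 1 - r ≠ 0 := by linarith
    have h₂ : 1 - r ^ 2 ≠ 0 := by nlinarith
    field_simp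
    ring
  · rw [abs_of_neg hr0, neg_add_cancel, mul_zero, zero_div, sub_zero, sub_neg_eq_add,
      ← sub_eq_add_neg]

theorem distortion_sub_eq_of_pos {k : ℝ} (hk : 0 < k) {z : ℂ} (hz : z ≠ 0) :
    let μ := (((1 - k) / (1 + k) : ℝ) : ℂ) * z * (conj z)⁻¹
    (1 + ‖μ‖) / (1 - ‖μ‖) - 2 * (‖μ‖ + (μ * conj (z / ‖z‖) ^ 2).re) / (1 - ‖μ‖ ^ 2) = k := by
  intro μ
  have hk' : 1 + k ≠ 0 := by positivity
  have hr : |(1 - k) / (1 + k)| < 1 := by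
    rw [abs_div, abs_of_pos (by linarith : 0 < 1 + k), div_lt_one (by linarith), abs_lt]
    constructor <;> linarith
  rw [norm_ofReal_mul_mul_inv_conj _ hz, ofReal_mul_mul_inv_conj_mul_conj_sq _ hz,
    Complex.ofReal_re, distortion_sub_eq_of_abs_lt_one hr]
  field_simp
  ring

/-- Let `M > 1`, `c = 2M/(M+1)`, and let `k₀` be the `2π`-periodic
function with `k₀ = 1` on `[0, cπ/2) ∪ [π, π + cπ/2)` and `k₀ = M` elsewhere on
`[0, 2π)`. Then `(1/(2π)) ∫₀^{2π} k₀ = c`, and for the Beltrami coefficient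
`μ₀(z) = ((1 − k₀(arg z))/(1 + k₀(arg z))) z z̄⁻¹` and every circle of radius
`ρ > 0` centered at the origin, the average over the circle of
`K_{μ₀} − 2(|μ₀| + Re(μ₀ n̄²))/(1 − |μ₀|²)` equals `c`, where `n(ξ) = ξ/|ξ|`. -/
theorem sharp_example_average (M c : ℝ) (hM : 1 < M) (hc : c = 2 * M / (M + 1))
    (k₀ : ℝ → ℝ)
    (hk₀per : Function.Periodic k₀ (2 * π))
    (hk₀1 : ∀ θ ∈ Ico 0 (c * π / 2) ∪ Ico π (π + c * π / 2), k₀ θ = 1)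
    (hk₀M : ∀ θ ∈ Ico (0 : ℝ) (2 * π),
      θ ∉ Ico 0 (c * π / 2) ∪ Ico π (π + c * π / 2) → k₀ θ = M)
    (μ₀ : ℂ → ℂ)
    (hμ₀ : ∀ z : ℂ, μ₀ z =
      (((1 - k₀ z.arg) / (1 + k₀ z.arg) : ℝ) : ℂ) * z * (starRingEnd ℂ z)⁻¹)
    (g : ℂ → ℝ)
    (hg : ∀ ξ : ℂ, ξ ≠ 0 → g ξ =
      (1 + ‖μ₀ ξ‖) / (1 - ‖μ₀ ξ‖) -
        2 * (‖μ₀ ξ‖ +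
          (μ₀ ξ * (starRingEnd ℂ (ξ / (↑‖ξ‖ : ℂ))) ^ 2).re) /
            (1 - ‖μ₀ ξ‖ ^ 2)) :
    (1 / (2 * π)) * (∫ θ in (0 : ℝ)..(2 * π), k₀ θ) = c ∧
    ∀ ρ : ℝ, 0 < ρ →
      (1 / (2 * π)) * (∫ t in (0 : ℝ)..(2 * π), g ((ρ : ℂ) * Complex.exp (t * Complex.I))) = c := by
  have hM₁ : 0 < M + 1 := by linarith
  have hc₂ : c ≤ 2 := by rw [hc, div_le_iff₀ hM₁]; linarith
  have hc₀ : 0 ≤ c * π / 2 := by rw [hc]; positivity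
  have hint := integral_two_valued_step_eq hc₀ (by nlinarith [pi_pos]) hk₀1 hk₀M
  have havg : (1 / (2 * π)) * (∫ θ in (0 : ℝ)..(2 * π), k₀ θ) = c := by
    rw [hint, hc]
    field_simp
    ring
  have hk₀pos (t : ℝ) : 0 < k₀ t := by
    obtain ⟨y, hy, hty⟩ := hk₀per.exists_mem_Ico₀ two_pi_pos t
    by_cases hys : y ∈ Ico 0 (c * π / 2) ∪ Ico π (π + c * π / 2)
    · rw [hty, hk₀1 y hys]; exact one_pos
    · rw [hty, hk₀M y hy hys]; linarith
  refine ⟨havg, fun ρ hρ => ?_⟩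
  rw [← havg]
  congr 1
  refine intervalIntegral.integral_congr fun t _ => ?_
  have hξ : (ρ : ℂ) * Complex.exp (t * Complex.I) ≠ 0 :=
    mul_ne_zero (Complex.ofReal_ne_zero.mpr hρ.ne') (Complex.exp_ne_zero _)
  rw [hg _ hξ, hμ₀, distortion_sub_eq_of_pos (hk₀pos _) hξ, hk₀per.apply_arg_ofReal_mul_exp hρ]
end
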